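/- arXiv:2206.14800 — 4 statements merged into one kernel-verified Lean document; each statement's English description precedes it below -/
import Mathlib

section
/- Let n ∈ ℕ, let the loss ℓ take values in {0,1}, and let A_n be an interpolating learning algorithm. Then the expected risk satisfies the exact identity R_D(A_n) = I(L; U) / log(n+1), where I(L; U) is the (unconditional) mutual information between the loss vector L and the held-out index U. -/
open MeasureTheory ProbabilityTheory Real
open scoped ENNReal NNReal Classical

noncomputable section


/-- Kullback--Leibler divergence of `μ` with respect to `ν`, valued in `ℝ≥0∞`. -/
def klDiv' {γ : Type*} [MeasurableSpace γ] (μ ν : Measure γ) : ℝ≥0∞ :=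
  if μ ≪ ν ∧ Integrable (fun x => Real.log ((μ.rnDeriv ν x).toReal)) μ
  then ENNReal.ofReal (∫ x, Real.log ((μ.rnDeriv ν x).toReal) ∂μ)
  else ⊤

/-- Mutual information `I(X;Y)` between two random variables. -/
def mutInfo {Ω α β : Type*} [MeasurableSpace Ω] [MeasurableSpace α] [MeasurableSpace β]
    (μ : Measure Ω) (X : Ω → α) (Y : Ω → β) : ℝ≥0∞ :=
  klDiv' (μ.map (fun ω => (X ω, Y ω))) ((μ.map X).prod (μ.map Y))

/-- Disintegrated mutual information `I_{Z=z}(X;Y)` between `X` and `Y` given `Z = z`. -/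
def dMutInfo {Ω α β γ : Type*} [MeasurableSpace Ω] [MeasurableSpace α] [MeasurableSpace β]
    [MeasurableSpace γ] [StandardBorelSpace α] [Nonempty α] [StandardBorelSpace β] [Nonempty β]
    (μ : Measure Ω) [IsFiniteMeasure μ] (X : Ω → α) (Y : Ω → β) (Z : Ω → γ) (z : γ) : ℝ≥0∞ :=
  klDiv' (condDistrib (fun ω => (X ω, Y ω)) Z μ z)
    ((condDistrib X Z μ z).prod (condDistrib Y Z μ z))

/-- Conditional mutual information `I(X;Y∣Z)`. -/
def condMutInfo {Ω α β γ : Type*} [MeasurableSpace Ω] [MeasurableSpace α] [MeasurableSpace β]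
    [MeasurableSpace γ] [StandardBorelSpace α] [Nonempty α] [StandardBorelSpace β] [Nonempty β]
    (μ : Measure Ω) [IsFiniteMeasure μ] (X : Ω → α) (Y : Ω → β) (Z : Ω → γ) : ℝ≥0∞ :=
  ∫⁻ z, dMutInfo μ X Y Z z ∂(μ.map Z)

/-- Shannon entropy of a measure: the usual discrete entropy if the measure is purely atomic,
and `∞` otherwise. -/
def measEntropy {γ : Type*} [MeasurableSpace γ] (ν : Measure γ) : ℝ≥0∞ :=
  if (∑' x, ν {x}) = ν Set.univ
  then ∑' x, ENNReal.ofReal (Real.negMulLog ((ν {x}).toReal))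
  else ⊤

end


lemma aux_measurable_eval {Ω α : Type*} [MeasurableSpace Ω] [MeasurableSpace α] {m : ℕ}
    {f : Ω → Fin m → α} {g : Ω → Fin m} (hf : Measurable f) (hg : Measurable g) :
    Measurable fun ω => f ω (g ω) := by
  intro s hs
  have h : (fun ω => f ω (g ω)) ⁻¹' s = ⋃ i, ({ω | g ω = i} ∩ (fun ω => f ω i) ⁻¹' s) := by
    ext ω
    simp only [Set.mem_preimage, Set.mem_iUnion, Set.mem_inter_iff, Set.mem_setOf_eq]
    exact ⟨fun h => ⟨g ω, rfl, h⟩, fun ⟨i, hi, h⟩ => hi ▸ h⟩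
  rw [h]
  exact MeasurableSet.iUnion fun i =>
    (hg (measurableSet_singleton i)).inter (((measurable_pi_apply i).comp hf) hs)

lemma aux_removeNth_lintegral {Z : Type*} [MeasurableSpace Z] (D : Measure Z)
    [IsProbabilityMeasure D] {n : ℕ} (u : Fin (n+1)) (F : (Fin n → Z) → Z → ℝ≥0∞)
    (hF : Measurable (Function.uncurry F)) :
    ∫⁻ z, F (u.removeNth z) (z u) ∂(Measure.pi fun _ : Fin (n+1) => D)
      = ∫⁻ s, ∫⁻ x, F s x ∂D ∂(Measure.pi fun _ : Fin n => D) := by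
  have hmp := measurePreserving_piFinSuccAbove (fun _ : Fin (n+1) => D) u
  have hg : Measurable fun p : Z × (Fin n → Z) => F p.2 p.1 :=
    hF.comp (measurable_snd.prodMk measurable_fst)
  have h1 : ∫⁻ z, F (u.removeNth z) (z u) ∂(Measure.pi fun _ : Fin (n+1) => D)
      = ∫⁻ p, F p.2 p.1 ∂(D.prod (Measure.pi fun _ : Fin n => D)) := by
    rw [← hmp.lintegral_comp hg]
    rfl
  rw [h1, lintegral_prod_symm _ hg.aemeasurable]

lemma aux_prod_diag {m : ℕ} (ν₁ : Measure (Fin (m+1) → ℝ)) (ν₂ : Measure (Fin (m+1))) [SFinite ν₂]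
    (c : Fin (m+1) → Fin (m+1) → ℝ) {s : Set ((Fin (m+1) → ℝ) × Fin (m+1))}
    (hs : MeasurableSet s) :
    ν₁.prod ν₂ ({x | x.1 = c x.2} ∩ s)
      = ∑ j : Fin (m+1), if (c j, j) ∈ s then ν₁ {c j} * ν₂ {j} else 0 := by
  have h : {x : (Fin (m+1) → ℝ) × Fin (m+1) | x.1 = c x.2} ∩ s
      = ⋃ j, ({(c j, j)} ∩ s) := by
    ext ⟨v, j⟩
    simp only [Set.mem_inter_iff, Set.mem_setOf_eq, Set.mem_iUnion, Set.mem_singleton_iff,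
      Prod.mk.injEq]
    constructor
    · rintro ⟨hv, hsm⟩; exact ⟨j, ⟨hv, rfl⟩, hsm⟩
    · rintro ⟨i, ⟨hv, hj⟩, hsm⟩; subst hj; exact ⟨hv, hsm⟩
  rw [h, measure_iUnion, tsum_fintype]
  · refine Finset.sum_congr rfl fun j _ => ?_
    by_cases hj : (c j, j) ∈ s
    · rw [if_pos hj]
      have : ({(c j, j)} : Set _) ∩ s = {(c j, j)} := by
        rw [Set.inter_eq_left]; simpa using hj
      rw [this, Set.singleton_prod_singleton.symm, Measure.prod_prod]
    · rw [if_neg hj, Set.singleton_inter_eq_empty.mpr hj, measure_empty]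
  · intro i j hij
    simp only [Function.onFun]
    refine Set.disjoint_left.mpr ?_
    rintro ⟨v, k⟩ ⟨h1, _⟩ ⟨h2, _⟩
    simp only [Set.mem_singleton_iff, Prod.mk.injEq] at h1 h2
    exact hij (h1.2.symm.trans h2.2)
  · exact fun j => ((MeasurableSet.singleton _).inter hs)

lemma aux_L'_measurable {Ω : Type*} [MeasurableSpace Ω]
    {m : ℕ} {U : Ω → Fin (m+1)} (hU : Measurable U) {E : Set Ω} (hE : MeasurableSet E) :
    Measurable (fun ω => if ω ∈ E then (Pi.single (U ω) 1 : Fin (m+1) → ℝ) else 0) := by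
  rw [measurable_pi_iff]
  intro i
  have h : (fun ω => (if ω ∈ E then (Pi.single (U ω) 1 : Fin (m+1) → ℝ) else 0) i)
      = fun ω => if ω ∈ E ∩ U ⁻¹' {i} then (1:ℝ) else 0 := by
    funext ω
    by_cases hωE : ω ∈ E
    · by_cases hωU : U ω = i
      · subst hωU; simp [hωE]
      · simp [hωE, hωU, Pi.single_eq_of_ne (Ne.symm hωU)]
    · simp [hωE]
  rw [h]
  exact measurable_const.ite (hE.inter (hU (measurableSet_singleton i))) measurable_const

lemma aux_map_pair {Ω : Type*} [MeasurableSpace Ω] (μ : Measure Ω)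
    {m : ℕ} {U : Ω → Fin (m+1)} (hU : Measurable U) {E : Set Ω} (hE : MeasurableSet E)
    {s : Set ((Fin (m+1) → ℝ) × Fin (m+1))} (hs : MeasurableSet s) :
    μ.map (fun ω => ((if ω ∈ E then (Pi.single (U ω) 1 : Fin (m+1) → ℝ) else 0), U ω)) s
      = ∑ j : Fin (m+1), ((if ((Pi.single j 1 : Fin (m+1) → ℝ), j) ∈ s then μ (E ∩ U ⁻¹' {j}) else 0)
          + (if ((0 : Fin (m+1) → ℝ), j) ∈ s then μ (Eᶜ ∩ U ⁻¹' {j}) else 0)) := by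
  have hL'm : Measurable (fun ω => if ω ∈ E then (Pi.single (U ω) 1 : Fin (m+1) → ℝ) else 0) :=
    aux_L'_measurable hU hE
  rw [Measure.map_apply (hL'm.prodMk hU) hs]
  set L' : Ω → Fin (m+1) → ℝ := fun ω => if ω ∈ E then (Pi.single (U ω) 1 : Fin (m+1) → ℝ) else 0
    with hL'def
  have hsplit : (fun ω => (L' ω, U ω)) ⁻¹' s = ⋃ j, ((fun ω => (L' ω, U ω)) ⁻¹' s ∩ U ⁻¹' {j}) := by
    ext ω; simp
  have hjset : ∀ j : Fin (m+1), (fun ω => (L' ω, U ω)) ⁻¹' s ∩ U ⁻¹' {j}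
      = (if ((Pi.single j 1 : Fin (m+1) → ℝ), j) ∈ s then E ∩ U ⁻¹' {j} else ∅)
        ∪ (if ((0 : Fin (m+1) → ℝ), j) ∈ s then Eᶜ ∩ U ⁻¹' {j} else ∅) := by
    intro j
    ext ω
    simp only [Set.mem_inter_iff, Set.mem_preimage, Set.mem_singleton_iff, Set.mem_union]
    by_cases hωU : U ω = j
    · by_cases hωE : ω ∈ E
      · have hval : L' ω = (Pi.single j 1 : Fin (m+1) → ℝ) := by
          rw [hL'def]; simp [hωE, hωU]
        rw [hval]
        split_ifs with h1 h2 <;> simp_all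
      · have hval : L' ω = (0 : Fin (m+1) → ℝ) := by rw [hL'def]; simp [hωE]
        rw [hval]
        split_ifs with h1 h2 <;> simp_all
    · split_ifs with h1 h2 <;> simp_all
  rw [hsplit, measure_iUnion, tsum_fintype]
  · refine Finset.sum_congr rfl fun j _ => ?_
    rw [hjset j]
    have hdisj : Disjoint (if ((Pi.single j 1 : Fin (m+1) → ℝ), j) ∈ s then E ∩ U ⁻¹' {j} else ∅)
        (if ((0 : Fin (m+1) → ℝ), j) ∈ s then Eᶜ ∩ U ⁻¹' {j} else ∅) := by
      split_ifs <;>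
        first
          | simp
          | exact Disjoint.mono Set.inter_subset_left Set.inter_subset_left
              disjoint_compl_right
    rw [measure_union hdisj]
    · split_ifs <;> simp
    · split_ifs
      · exact hE.compl.inter (hU (measurableSet_singleton j))
      · exact MeasurableSet.empty
  · intro i j hij
    simp only [Function.onFun]
    refine Set.disjoint_left.mpr ?_
    rintro ω ⟨_, h1⟩ ⟨_, h2⟩
    simp only [Set.mem_preimage, Set.mem_singleton_iff] at h1 h2
    exact hij (h1.symm.trans h2)
  · exact fun j => ((hL'm.prodMk hU) hs).inter (hU (measurableSet_singleton j))

lemma aux_single_ne_zero {m : ℕ} (j : Fin (m+1)) : (Pi.single j 1 : Fin (m+1) → ℝ) ≠ 0 := by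
  intro h
  have := congrFun h j
  simp at this

lemma aux_map_L'_zero {Ω : Type*} [MeasurableSpace Ω] (μ : Measure Ω)
    {m : ℕ} {U : Ω → Fin (m+1)} (hU : Measurable U) {E : Set Ω} (hE : MeasurableSet E) :
    μ.map (fun ω => if ω ∈ E then (Pi.single (U ω) 1 : Fin (m+1) → ℝ) else 0) {0} = μ Eᶜ := by
  rw [Measure.map_apply (aux_L'_measurable hU hE) (measurableSet_singleton _)]
  congr 1
  ext ω
  by_cases hωE : ω ∈ E <;> simp [hωE, aux_single_ne_zero (U ω)]

lemma aux_map_L'_single {Ω : Type*} [MeasurableSpace Ω] (μ : Measure Ω)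
    {m : ℕ} {U : Ω → Fin (m+1)} (hU : Measurable U) {E : Set Ω} (hE : MeasurableSet E)
    (j : Fin (m+1)) :
    μ.map (fun ω => if ω ∈ E then (Pi.single (U ω) 1 : Fin (m+1) → ℝ) else 0)
        {(Pi.single j 1 : Fin (m+1) → ℝ)} = μ (E ∩ U ⁻¹' {j}) := by
  rw [Measure.map_apply (aux_L'_measurable hU hE) (measurableSet_singleton _)]
  congr 1
  ext ω
  by_cases hωE : ω ∈ E
  · have hval : (if ω ∈ E then (Pi.single (U ω) 1 : Fin (m+1) → ℝ) else 0)
        = Pi.single (U ω) 1 := if_pos hωE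
    simp only [Set.mem_preimage, Set.mem_singleton_iff, Set.mem_inter_iff]
    rw [hval]
    constructor
    · intro h
      refine ⟨hωE, ?_⟩
      by_contra hne
      have h2 := congrFun h (U ω)
      rw [Pi.single_eq_same, Pi.single_eq_of_ne hne] at h2
      norm_num at h2
    · rintro ⟨-, hj⟩; rw [hj]
  · simp only [Set.mem_preimage, Set.mem_singleton_iff, if_neg hωE, Set.mem_inter_iff, hωE,
      false_and, iff_false]
    exact fun h => aux_single_ne_zero j h.symm

lemma aux_diag_measurable {m : ℕ} (c : Fin (m+1) → Fin (m+1) → ℝ) :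
    MeasurableSet {x : (Fin (m+1) → ℝ) × Fin (m+1) | x.1 = c x.2} := by
  have h : {x : (Fin (m+1) → ℝ) × Fin (m+1) | x.1 = c x.2}
      = ⋃ j, ({(c j, j)} : Set ((Fin (m+1) → ℝ) × Fin (m+1))) := by
    ext ⟨v, k⟩
    simp only [Set.mem_setOf_eq, Set.mem_iUnion, Set.mem_singleton_iff, Prod.mk.injEq]
    exact ⟨fun h => ⟨k, h, rfl⟩, fun ⟨j, hv, hj⟩ => by subst hj; exact hv⟩
  rw [h]
  exact MeasurableSet.iUnion fun j => MeasurableSet.singleton _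

lemma aux_withDensity_apply {m : ℕ} (ν₁ : Measure (Fin (m+1) → ℝ)) (ν₂ : Measure (Fin (m+1)))
    [SFinite ν₁] [SFinite ν₂]
    {s : Set ((Fin (m+1) → ℝ) × Fin (m+1))} (hs : MeasurableSet s) :
    (ν₁.prod ν₂).withDensity
        (fun x => ({x : (Fin (m+1) → ℝ) × Fin (m+1) | x.1 = 0}.indicator (fun _ => 1) x)
          + ({x : (Fin (m+1) → ℝ) × Fin (m+1) | x.1 = Pi.single x.2 1}.indicator
              (fun _ => (m+1 : ℝ≥0∞)) x)) s
      = ∑ j : Fin (m+1),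
          ((if ((Pi.single j 1 : Fin (m+1) → ℝ), j) ∈ s
              then (m+1 : ℝ≥0∞) * (ν₁ {(Pi.single j 1 : Fin (m+1) → ℝ)} * ν₂ {j}) else 0)
            + (if ((0 : Fin (m+1) → ℝ), j) ∈ s then ν₁ {0} * ν₂ {j} else 0)) := by
  have hA₀ : MeasurableSet {x : (Fin (m+1) → ℝ) × Fin (m+1) | x.1 = 0} :=
    aux_diag_measurable (fun _ => 0)
  have hA₁ : MeasurableSet {x : (Fin (m+1) → ℝ) × Fin (m+1) | x.1 = Pi.single x.2 1} :=
    aux_diag_measurable (fun j => Pi.single j 1)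
  rw [withDensity_apply _ hs, lintegral_add_left ((measurable_const.indicator hA₀))]
  rw [lintegral_indicator hA₀, lintegral_indicator hA₁]
  rw [Measure.restrict_restrict hA₀, Measure.restrict_restrict hA₁]
  rw [lintegral_const, lintegral_const]
  rw [Measure.restrict_apply MeasurableSet.univ, Measure.restrict_apply MeasurableSet.univ]
  rw [Set.univ_inter, Set.univ_inter]
  rw [aux_prod_diag ν₁ ν₂ (fun _ => 0) hs, aux_prod_diag ν₁ ν₂ (fun j => Pi.single j 1) hs]
  rw [one_mul, Finset.mul_sum, ← Finset.sum_add_distrib]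
  refine Finset.sum_congr rfl fun j _ => ?_
  rw [add_comm, mul_ite, mul_zero]

lemma aux_lintegral_le_one {Z : Type*} [MeasurableSpace Z] (D : Measure Z)
    [IsProbabilityMeasure D] {f : Z → ℝ≥0∞} (hf : ∀ z, f z ≤ 1) : ∫⁻ z, f z ∂D ≤ 1 := by
  calc ∫⁻ z, f z ∂D ≤ ∫⁻ _, 1 ∂D := lintegral_mono hf
  _ = 1 := by simp

lemma aux_q1 {Z R ℋ : Type*} [MeasurableSpace Z] [MeasurableSpace R] [MeasurableSpace ℋ]
    (D : Measure Z) [IsProbabilityMeasure D] {n : ℕ}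
    (νU : Measure (Fin (n+1))) [IsProbabilityMeasure νU] (νξ : Measure R) [SFinite νξ]
    (A : (Fin n → Z) → R → ℋ) (hA : Measurable (Function.uncurry A))
    (g : ℋ → Z → ℝ≥0∞) (hg : Measurable (Function.uncurry g)) :
    ∫⁻ p, (∫⁻ y, g (A ((p.2.1).removeNth p.1) p.2.2) y ∂D)
        ∂((Measure.pi fun _ : Fin (n+1) => D).prod (νU.prod νξ))
      = ∫⁻ r, ∫⁻ s, ∫⁻ x, g (A s r) x ∂D ∂(Measure.pi fun _ : Fin n => D) ∂νξ := by
  have hφm : Measurable fun p : (Fin (n+1) → Z) × (Fin (n+1) × R) =>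
      A ((p.2.1).removeNth p.1) p.2.2 := by
    refine hA.comp (Measurable.prodMk ?_ (measurable_snd.comp measurable_snd))
    rw [measurable_pi_iff]
    intro i
    exact aux_measurable_eval measurable_fst
      ((measurable_of_countable (fun u : Fin (n+1) => u.succAbove i)).comp' measurable_snd.fst)
  have hFm : Measurable fun q : ((Fin (n+1) → Z) × (Fin (n+1) × R)) × Z =>
      g (A ((q.1.2.1).removeNth q.1.1) q.1.2.2) q.2 :=
    hg.comp ((hφm.comp measurable_fst).prodMk measurable_snd)
  have hGm : Measurable fun p : (Fin (n+1) → Z) × (Fin (n+1) × R) =>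
      ∫⁻ y, g (A ((p.2.1).removeNth p.1) p.2.2) y ∂D :=
    Measurable.lintegral_prod_right' hFm
  rw [lintegral_prod_symm _ hGm.aemeasurable]
  have h2 : ∀ p : Fin (n+1) × R,
      ∫⁻ z, (∫⁻ y, g (A ((p.1).removeNth z) p.2) y ∂D) ∂(Measure.pi fun _ : Fin (n+1) => D)
        = ∫⁻ s, ∫⁻ x, g (A s p.2) x ∂D ∂(Measure.pi fun _ : Fin n => D) := by
    intro p
    have hFm2 : Measurable (Function.uncurry fun (s : Fin n → Z) (_ : Z) =>
        ∫⁻ y, g (A s p.2) y ∂D) := by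
      apply Measurable.comp (f := fun q : (Fin n → Z) × Z => q.1)
        (g := fun s : Fin n → Z => ∫⁻ y, g (A s p.2) y ∂D)
      · exact Measurable.lintegral_prod_right'
          (hg.comp (((hA.comp (measurable_fst.prodMk measurable_const))).prodMk measurable_snd))
      · exact measurable_fst
    have := aux_removeNth_lintegral D p.1
      (fun s (_ : Z) => ∫⁻ y, g (A s p.2) y ∂D) hFm2
    rw [this]
    refine lintegral_congr fun s => ?_
    rw [lintegral_const]
    simp
  calc ∫⁻ p : Fin (n+1) × R, ∫⁻ z, (∫⁻ y, g (A ((p.1).removeNth z) p.2) y ∂D)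
        ∂(Measure.pi fun _ : Fin (n+1) => D) ∂(νU.prod νξ)
      = ∫⁻ p : Fin (n+1) × R, ∫⁻ s, ∫⁻ x, g (A s p.2) x ∂D
          ∂(Measure.pi fun _ : Fin n => D) ∂(νU.prod νξ) := lintegral_congr h2
    _ = ∫⁻ _u, ∫⁻ r, ∫⁻ s, ∫⁻ x, g (A s r) x ∂D ∂(Measure.pi fun _ : Fin n => D) ∂νξ ∂νU := by
        have hHm : Measurable fun r : R =>
            ∫⁻ s, ∫⁻ x, g (A s r) x ∂D ∂(Measure.pi fun _ : Fin n => D) := by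
          apply Measurable.lintegral_prod_right'
            (f := fun q : R × (Fin n → Z) => ∫⁻ x, g (A q.2 q.1) x ∂D)
          apply Measurable.lintegral_prod_right'
            (f := fun q : (R × (Fin n → Z)) × Z => g (A q.1.2 q.1.1) q.2)
          exact hg.comp ((hA.comp ((measurable_snd.comp measurable_fst).prodMk
            (measurable_fst.comp measurable_fst))).prodMk measurable_snd)
        exact lintegral_prod _ (hHm.comp measurable_snd).aemeasurable
    _ = ∫⁻ r, ∫⁻ s, ∫⁻ x, g (A s r) x ∂D ∂(Measure.pi fun _ : Fin n => D) ∂νξ := by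
        rw [lintegral_const]
        simp

lemma aux_q2 {Z R ℋ : Type*} [MeasurableSpace Z] [MeasurableSpace R] [MeasurableSpace ℋ]
    (D : Measure Z) [IsProbabilityMeasure D] {n : ℕ}
    (νU : Measure (Fin (n+1))) [IsFiniteMeasure νU] (νξ : Measure R) [SFinite νξ]
    (A : (Fin n → Z) → R → ℋ) (hA : Measurable (Function.uncurry A))
    (g : ℋ → Z → ℝ≥0∞) (hg : Measurable (Function.uncurry g)) (j : Fin (n+1)) :
    ∫⁻ p, (if p.2.1 = j then g (A ((p.2.1).removeNth p.1) p.2.2) (p.1 j) else 0)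
        ∂((Measure.pi fun _ : Fin (n+1) => D).prod (νU.prod νξ))
      = νU {j} * ∫⁻ r, ∫⁻ s, ∫⁻ x, g (A s r) x ∂D ∂(Measure.pi fun _ : Fin n => D) ∂νξ := by
  have hφm : Measurable fun p : (Fin (n+1) → Z) × (Fin (n+1) × R) =>
      A ((p.2.1).removeNth p.1) p.2.2 := by
    refine hA.comp (Measurable.prodMk ?_ (measurable_snd.comp measurable_snd))
    rw [measurable_pi_iff]
    intro i
    exact aux_measurable_eval measurable_fst
      ((measurable_of_countable (fun u : Fin (n+1) => u.succAbove i)).comp' measurable_snd.fst)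
  have hsetm : MeasurableSet {p : (Fin (n+1) → Z) × (Fin (n+1) × R) | p.2.1 = j} :=
    measurable_snd.fst (measurableSet_singleton j)
  have hval : Measurable fun p : (Fin (n+1) → Z) × (Fin (n+1) × R) =>
      g (A ((p.2.1).removeNth p.1) p.2.2) (p.1 j) :=
    hg.comp (hφm.prodMk ((measurable_pi_apply j).comp measurable_fst))
  have hfm : Measurable fun p : (Fin (n+1) → Z) × (Fin (n+1) × R) =>
      (if p.2.1 = j then g (A ((p.2.1).removeNth p.1) p.2.2) (p.1 j) else 0) :=
    Measurable.ite hsetm hval measurable_const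
  rw [lintegral_prod_symm _ hfm.aemeasurable]
  have h2 : ∀ p : Fin (n+1) × R,
      ∫⁻ z, (if p.1 = j then g (A ((p.1).removeNth z) p.2) (z j) else 0)
          ∂(Measure.pi fun _ : Fin (n+1) => D)
        = if p.1 = j then ∫⁻ s, ∫⁻ x, g (A s p.2) x ∂D ∂(Measure.pi fun _ : Fin n => D)
          else 0 := by
    rintro ⟨u, r⟩
    by_cases hu : u = j
    · subst hu
      simp only [if_pos rfl]
      exact aux_removeNth_lintegral D u (fun s x => g (A s r) x)
        (hg.comp ((hA.comp (measurable_fst.prodMk measurable_const)).prodMk measurable_snd))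
    · simp only [if_neg hu, lintegral_zero]
  calc ∫⁻ p : Fin (n+1) × R, ∫⁻ z, (if p.1 = j then g (A ((p.1).removeNth z) p.2) (z j) else 0)
        ∂(Measure.pi fun _ : Fin (n+1) => D) ∂(νU.prod νξ)
      = ∫⁻ p : Fin (n+1) × R, (if p.1 = j then
          ∫⁻ s, ∫⁻ x, g (A s p.2) x ∂D ∂(Measure.pi fun _ : Fin n => D) else 0)
          ∂(νU.prod νξ) := lintegral_congr h2
    _ = ∫⁻ u, ∫⁻ r, (if u = j then
          ∫⁻ s, ∫⁻ x, g (A s r) x ∂D ∂(Measure.pi fun _ : Fin n => D) else 0) ∂νξ ∂νU := by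
        have hHm : Measurable fun r : R =>
            ∫⁻ s, ∫⁻ x, g (A s r) x ∂D ∂(Measure.pi fun _ : Fin n => D) := by
          apply Measurable.lintegral_prod_right'
            (f := fun q : R × (Fin n → Z) => ∫⁻ x, g (A q.2 q.1) x ∂D)
          apply Measurable.lintegral_prod_right'
            (f := fun q : (R × (Fin n → Z)) × Z => g (A q.1.2 q.1.1) q.2)
          exact hg.comp ((hA.comp ((measurable_snd.comp measurable_fst).prodMk
            (measurable_fst.comp measurable_fst))).prodMk measurable_snd)
        refine lintegral_prod _ ?_
        exact (Measurable.ite (measurable_fst (measurableSet_singleton j))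
          (hHm.comp measurable_snd) measurable_const).aemeasurable
    _ = ∫⁻ u, (if u = j then
          ∫⁻ r, ∫⁻ s, ∫⁻ x, g (A s r) x ∂D ∂(Measure.pi fun _ : Fin n => D) ∂νξ else 0) ∂νU := by
        refine lintegral_congr fun u => ?_
        by_cases hu : u = j <;> simp [hu]
    _ = νU {j} * ∫⁻ r, ∫⁻ s, ∫⁻ x, g (A s r) x ∂D ∂(Measure.pi fun _ : Fin n => D) ∂νξ := by
        rw [lintegral_fintype]
        rw [Finset.sum_eq_single j]
        · rw [if_pos rfl, mul_comm]
        · intro u _ hu; rw [if_neg hu, zero_mul]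
        · intro h; exact absurd (Finset.mem_univ j) h


/-- For `{0,1}`-valued loss and an interpolating algorithm, the expected risk satisfies the
exact identity `R = I(L;U) / log (n+1)`. -/
theorem risk_eq_mutInfo_div_log
    {Ω 𝒳 𝒴 ℋ R : Type*} [MeasurableSpace Ω] [MeasurableSpace 𝒳] [MeasurableSpace 𝒴]
    [MeasurableSpace ℋ] [MeasurableSpace R]
    (μ : Measure Ω) [IsProbabilityMeasure μ]
    (D : Measure (𝒳 × 𝒴)) [IsProbabilityMeasure D]
    (n : ℕ) (hn : 1 ≤ n)
    -- the loss function
    (ℓ : ℋ → 𝒳 × 𝒴 → ℝ) (hℓmeas : Measurable (Function.uncurry ℓ))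
    -- the (possibly randomized) learning algorithm
    (A : (Fin n → 𝒳 × 𝒴) → R → ℋ) (hA : Measurable (Function.uncurry A))
    -- the supersample, the held-out index, and the internal randomness of the algorithm
    (Zt : Ω → Fin (n+1) → 𝒳 × 𝒴) (hZt : Measurable Zt)
    (U : Ω → Fin (n+1)) (hU : Measurable U)
    (ξ : Ω → R) (hξ : Measurable ξ)
    (hiid : μ.map Zt = Measure.pi fun _ : Fin (n+1) => D)
    (hUunif : ∀ i, μ {ω | U ω = i} = (↑(n+1) : ℝ≥0∞)⁻¹)
    (hUindep : IndepFun U Zt μ)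
    (hξindep : IndepFun ξ (fun ω => (Zt ω, U ω)) μ)
    -- the output classifier `W = A(S_n)` on the training sample `S_n = Z̃₋ᵤ`
    (W : Ω → ℋ) (hW : ∀ ω, W ω = A ((U ω).removeNth (Zt ω)) (ξ ω))
    -- the loss vector `L` on the supersample
    (L : Ω → Fin (n+1) → ℝ) (hL : ∀ ω i, L ω i = ℓ (W ω) (Zt ω i))
    (hℓbin : ∀ h z, ℓ h z = 0 ∨ ℓ h z = 1)
    -- `A` is interpolating: the empirical risk on the training sample vanishes a.s.
    (hinterp : ∀ᵐ ω ∂μ, (n : ℝ)⁻¹ * ∑ i : Fin n, ℓ (W ω) ((U ω).removeNth (Zt ω) i) = 0) :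
    ENNReal.ofReal (∫ ω, ∫ z, ℓ (W ω) z ∂D ∂μ)
      = mutInfo μ L U / ENNReal.ofReal (Real.log (n + 1)) := by
  classical
  have hone : (1:ℝ) < (n:ℝ) + 1 := by
    have h1 : (1:ℝ) ≤ (n:ℝ) := by exact_mod_cast hn
    linarith
  have hlogpos : 0 < Real.log ((n:ℝ) + 1) := Real.log_pos hone
  -- measurability of basic objects
  have hWeq : W = fun ω => A ((U ω).removeNth (Zt ω)) (ξ ω) := funext hW
  have hSm : Measurable fun ω => (U ω).removeNth (Zt ω) := by
    rw [measurable_pi_iff]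
    intro i
    show Measurable fun ω => Zt ω ((U ω).succAbove i)
    exact aux_measurable_eval hZt
      ((measurable_of_countable (fun u : Fin (n+1) => u.succAbove i)).comp' hU)
  have hWm : Measurable W := by
    rw [hWeq]; exact hA.comp (hSm.prodMk hξ)
  have hLeq : L = fun ω i => ℓ (W ω) (Zt ω i) := funext fun ω => funext fun i => hL ω i
  have hLm : Measurable L := by
    rw [hLeq, measurable_pi_iff]
    intro i
    exact hℓmeas.comp (hWm.prodMk ((measurable_pi_apply i).comp hZt))
  -- the event E of positive loss at the held-out index
  have hfEm : Measurable fun ω => ℓ (W ω) (Zt ω (U ω)) :=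
    hℓmeas.comp (hWm.prodMk (aux_measurable_eval hZt hU))
  set E : Set Ω := {ω | ℓ (W ω) (Zt ω (U ω)) = 1} with hEdef
  have hEm : MeasurableSet E := hfEm (measurableSet_singleton 1)
  -- distributions
  set Dn1 : Measure (Fin (n+1) → 𝒳 × 𝒴) := Measure.pi fun _ => D with hDn1
  set Dn : Measure (Fin n → 𝒳 × 𝒴) := Measure.pi fun _ => D with hDn
  set νU : Measure (Fin (n+1)) := μ.map U with hνU
  set νξ : Measure R := μ.map ξ with hνξ
  have hPMνU : IsProbabilityMeasure νU := Measure.isProbabilityMeasure_map hU.aemeasurable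
  have hPMνξ : IsProbabilityMeasure νξ := Measure.isProbabilityMeasure_map hξ.aemeasurable
  have hPMDn1 : IsProbabilityMeasure Dn1 := by rw [hDn1]; infer_instance
  have hPMDn : IsProbabilityMeasure Dn := by rw [hDn]; infer_instance
  have hνUj : ∀ j, νU {j} = (↑(n+1) : ℝ≥0∞)⁻¹ := by
    intro j
    rw [hνU, Measure.map_apply hU (measurableSet_singleton j)]
    exact hUunif j
  -- the joint law of (Zt, U, ξ)
  have hmapT : μ.map (fun ω => (Zt ω, (U ω, ξ ω))) = Dn1.prod (νU.prod νξ) := by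
    have h1 : μ.map (fun ω => (ξ ω, (Zt ω, U ω)))
        = νξ.prod (μ.map fun ω => (Zt ω, U ω)) :=
      (indepFun_iff_map_prod_eq_prod_map_map hξ.aemeasurable
        (hZt.prodMk hU).aemeasurable).mp hξindep
    have h2 : μ.map (fun ω => (Zt ω, U ω)) = Dn1.prod νU := by
      have := (indepFun_iff_map_prod_eq_prod_map_map hZt.aemeasurable
        hU.aemeasurable).mp hUindep.symm
      rw [this, hiid, hDn1, hνU]
    have h3 : μ.map (fun ω => ((Zt ω, U ω), ξ ω)) = (Dn1.prod νU).prod νξ := by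
      have hswap : μ.map (fun ω => ((Zt ω, U ω), ξ ω))
          = (μ.map (fun ω => (ξ ω, (Zt ω, U ω)))).map Prod.swap := by
        rw [Measure.map_map measurable_swap (hξ.prodMk (hZt.prodMk hU))]
        rfl
      rw [hswap, h1, h2, Measure.prod_swap]
    calc μ.map (fun ω => (Zt ω, (U ω, ξ ω)))
        = (μ.map (fun ω => ((Zt ω, U ω), ξ ω))).map MeasurableEquiv.prodAssoc := by
          rw [Measure.map_map MeasurableEquiv.prodAssoc.measurable
            ((hZt.prodMk hU).prodMk hξ)]
          rfl
      _ = Dn1.prod (νU.prod νξ) := by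
          rw [h3, (measurePreserving_prodAssoc Dn1 νU νξ).map_eq]
  have hφm : Measurable fun p : (Fin (n+1) → 𝒳 × 𝒴) × (Fin (n+1) × R) =>
      A ((p.2.1).removeNth p.1) p.2.2 := by
    refine hA.comp (Measurable.prodMk ?_ (measurable_snd.comp measurable_snd))
    rw [measurable_pi_iff]
    intro i
    show Measurable fun p : (Fin (n+1) → 𝒳 × 𝒴) × (Fin (n+1) × R) =>
      p.1 ((p.2.1).succAbove i)
    exact aux_measurable_eval measurable_fst
      ((measurable_of_countable (fun u : Fin (n+1) => u.succAbove i)).comp' measurable_snd.fst)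
  -- the fundamental quantity q
  set q : ℝ≥0∞ := ∫⁻ r, ∫⁻ s, ∫⁻ x, ENNReal.ofReal (ℓ (A s r) x) ∂D ∂Dn ∂νξ with hq
  have hℓ'le : ∀ h z, ENNReal.ofReal (ℓ h z) ≤ 1 := by
    intro h z
    rcases hℓbin h z with h | h <;> simp [h]
  have hℓ'm : Measurable fun pz : ℋ × (𝒳 × 𝒴) => ENNReal.ofReal (ℓ pz.1 pz.2) :=
    ENNReal.measurable_ofReal.comp hℓmeas
  have hq_le : q ≤ 1 := by
    rw [hq]
    refine aux_lintegral_le_one νξ fun r => ?_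
    refine aux_lintegral_le_one Dn fun s => ?_
    exact aux_lintegral_le_one D fun x => hℓ'le _ _
  have hq_ne_top : q ≠ ⊤ := (lt_of_le_of_lt hq_le ENNReal.one_lt_top).ne
  -- step B : the risk equals q
  have hrisk : ∫⁻ ω, ∫⁻ z, ENNReal.ofReal (ℓ (W ω) z) ∂D ∂μ = q := by
    have hGm : Measurable fun p : (Fin (n+1) → 𝒳 × 𝒴) × (Fin (n+1) × R) =>
        ∫⁻ y, ENNReal.ofReal (ℓ (A ((p.2.1).removeNth p.1) p.2.2) y) ∂D := by
      apply Measurable.lintegral_prod_right'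
        (f := fun q : ((Fin (n+1) → 𝒳 × 𝒴) × (Fin (n+1) × R)) × (𝒳 × 𝒴) =>
          ENNReal.ofReal (ℓ (A ((q.1.2.1).removeNth q.1.1) q.1.2.2) q.2))
      exact hℓ'm.comp ((hφm.comp measurable_fst).prodMk measurable_snd)
    have h1 : ∫⁻ ω, ∫⁻ z, ENNReal.ofReal (ℓ (W ω) z) ∂D ∂μ
        = ∫⁻ p, (∫⁻ y, ENNReal.ofReal (ℓ (A ((p.2.1).removeNth p.1) p.2.2) y) ∂D)
            ∂(Dn1.prod (νU.prod νξ)) := by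
      rw [← hmapT, lintegral_map hGm (hZt.prodMk (hU.prodMk hξ))]
      refine lintegral_congr fun ω => ?_
      rw [hW ω]
    rw [h1, aux_q1 D νU νξ A hA (fun h z => ENNReal.ofReal (ℓ h z)) hℓ'm, hq, hDn]
  -- step C : the per-index event probabilities
  have hEq : ∀ j, μ (E ∩ U ⁻¹' {j}) = (↑(n+1) : ℝ≥0∞)⁻¹ * q := by
    intro j
    have hind : μ (E ∩ U ⁻¹' {j})
        = ∫⁻ ω, (if U ω = j then ENNReal.ofReal (ℓ (W ω) (Zt ω j)) else 0) ∂μ := by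
      rw [← lintegral_indicator_one (hEm.inter (hU (measurableSet_singleton j)))]
      refine lintegral_congr fun ω => ?_
      by_cases hUω : U ω = j
      · rcases hℓbin (W ω) (Zt ω j) with h0 | h1
        · have hωE : ω ∉ E := by
            rw [hEdef]; simp only [Set.mem_setOf_eq, hUω, h0]; norm_num
          rw [if_pos hUω, h0, Set.indicator_of_notMem]
          · simp
          · simp [hωE]
        · have hωE : ω ∈ E := by
            rw [hEdef]; simp only [Set.mem_setOf_eq, hUω, h1]
          rw [if_pos hUω, h1, Set.indicator_of_mem]
          · simp
          · exact ⟨hωE, hUω⟩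
      · rw [if_neg hUω, Set.indicator_of_notMem]
        simp [hUω]
    have hsetm : MeasurableSet {p : (Fin (n+1) → 𝒳 × 𝒴) × (Fin (n+1) × R) | p.2.1 = j} :=
      measurable_snd.fst (measurableSet_singleton j)
    have hgm : Measurable fun p : (Fin (n+1) → 𝒳 × 𝒴) × (Fin (n+1) × R) =>
        (if p.2.1 = j then ENNReal.ofReal (ℓ (A ((p.2.1).removeNth p.1) p.2.2) (p.1 j))
          else 0) :=
      Measurable.ite hsetm
        (hℓ'm.comp (hφm.prodMk ((measurable_pi_apply j).comp measurable_fst)))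
        measurable_const
    have h2 : ∫⁻ ω, (if U ω = j then ENNReal.ofReal (ℓ (W ω) (Zt ω j)) else 0) ∂μ
        = ∫⁻ p, (if p.2.1 = j then
            ENNReal.ofReal (ℓ (A ((p.2.1).removeNth p.1) p.2.2) (p.1 j)) else 0)
            ∂(Dn1.prod (νU.prod νξ)) := by
      rw [← hmapT, lintegral_map hgm (hZt.prodMk (hU.prodMk hξ))]
      refine lintegral_congr fun ω => ?_
      rw [hW ω]
    rw [hind, h2, aux_q2 D νU νξ A hA (fun h z => ENNReal.ofReal (ℓ h z)) hℓ'm j,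
      hνUj j, hq, hDn]
  -- summing over j
  have hsum : ∑ _j : Fin (n+1), (↑(n+1) : ℝ≥0∞)⁻¹ * q = q := by
    rw [Finset.sum_const, Finset.card_univ, Fintype.card_fin, nsmul_eq_mul,
      ← mul_assoc, ENNReal.mul_inv_cancel (by exact_mod_cast Nat.succ_ne_zero n)
        (ENNReal.natCast_ne_top (n+1)), one_mul]
  have hμE : μ E = q := by
    have hdecomp : E = ⋃ j, (E ∩ U ⁻¹' {j}) := by
      ext ω; simp
    rw [hdecomp, measure_iUnion, tsum_fintype]
    · rw [Finset.sum_congr rfl fun j _ => hEq j, hsum]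
    · intro i j hij
      simp only [Function.onFun]
      refine Set.disjoint_left.mpr ?_
      rintro ω ⟨_, h1⟩ ⟨_, h2⟩
      simp only [Set.mem_preimage, Set.mem_singleton_iff] at h1 h2
      exact hij (h1.symm.trans h2)
    · exact fun j => hEm.inter (hU (measurableSet_singleton j))
  have hμEc : μ Eᶜ = 1 - q := by
    rw [measure_compl hEm (measure_ne_top μ E), measure_univ, hμE]
  -- the canonical form L' of the loss vector
  set L' : Ω → Fin (n+1) → ℝ := fun ω => if ω ∈ E then Pi.single (U ω) 1 else 0 with hL'def
  have hLL' : L =ᵐ[μ] L' := by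
    filter_upwards [hinterp] with ω hω
    have hzero : ∀ i, i ≠ U ω → ℓ (W ω) (Zt ω i) = 0 := by
      intro i hi
      obtain ⟨k, hk⟩ := Fin.exists_succAbove_eq hi
      have hnz : (n:ℝ)⁻¹ ≠ 0 := by
        refine inv_ne_zero ?_
        exact_mod_cast Nat.one_le_iff_ne_zero.mp hn
      have hsum0 : ∑ i : Fin n, ℓ (W ω) ((U ω).removeNth (Zt ω) i) = 0 := by
        rcases mul_eq_zero.mp hω with h | h
        · exact absurd h hnz
        · exact h
      have hterm := (Finset.sum_eq_zero_iff_of_nonneg fun k _ => by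
        rcases hℓbin (W ω) ((U ω).removeNth (Zt ω) k) with h0 | h1
        · rw [h0]
        · rw [h1]; norm_num).mp hsum0 k (Finset.mem_univ k)
      have : (U ω).removeNth (Zt ω) k = Zt ω ((U ω).succAbove k) := rfl
      rw [this, hk] at hterm
      exact hterm
    funext i
    by_cases hi : i = U ω
    · subst hi
      rw [hL ω (U ω)]
      by_cases hωE : ω ∈ E
      · have h1 : ℓ (W ω) (Zt ω (U ω)) = 1 := hωE
        rw [hL'def]
        simp only [if_pos hωE, Pi.single_eq_same]
        exact h1
      · have h0 : ℓ (W ω) (Zt ω (U ω)) = 0 := by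
          rcases hℓbin (W ω) (Zt ω (U ω)) with h0 | h1
          · exact h0
          · exact absurd h1 hωE
        rw [hL'def]
        simp only [if_neg hωE, Pi.zero_apply]
        exact h0
    · rw [hL ω i, hzero i hi, hL'def]
      by_cases hωE : ω ∈ E
      · simp only [if_pos hωE, Pi.single_eq_of_ne hi]
      · simp only [if_neg hωE, Pi.zero_apply]
  have hmapL : μ.map L = μ.map L' := Measure.map_congr hLL'
  have hmapPair : μ.map (fun ω => (L ω, U ω)) = μ.map (fun ω => (L' ω, U ω)) :=
    Measure.map_congr (hLL'.mono fun ω h => by simp only [h])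
  -- the density f
  set f : (Fin (n+1) → ℝ) × Fin (n+1) → ℝ≥0∞ := fun x =>
    ({x : (Fin (n+1) → ℝ) × Fin (n+1) | x.1 = 0}.indicator (fun _ => 1) x)
      + ({x : (Fin (n+1) → ℝ) × Fin (n+1) | x.1 = Pi.single x.2 1}.indicator
          (fun _ => (n+1 : ℝ≥0∞)) x) with hfdef
  have hA₀m : MeasurableSet {x : (Fin (n+1) → ℝ) × Fin (n+1) | x.1 = 0} :=
    aux_diag_measurable (fun _ => 0)
  have hA₁m : MeasurableSet {x : (Fin (n+1) → ℝ) × Fin (n+1) | x.1 = Pi.single x.2 1} :=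
    aux_diag_measurable (fun j => Pi.single j 1)
  have hfm : Measurable f := by
    rw [hfdef]
    exact (measurable_const.indicator hA₀m).add (measurable_const.indicator hA₁m)
  set ρ : Measure ((Fin (n+1) → ℝ) × Fin (n+1)) := (μ.map L').prod νU with hρdef
  have hPMmapL' : IsProbabilityMeasure (μ.map L') := by
    rw [← hmapL]
    exact Measure.isProbabilityMeasure_map hLm.aemeasurable
  have hPMρ : IsProbabilityMeasure ρ := by rw [hρdef]; infer_instance
  -- J = ρ.withDensity f
  have hcastinv : ((n : ℝ≥0∞) + 1) * ((↑(n+1) : ℝ≥0∞)⁻¹ * q * (↑(n+1) : ℝ≥0∞)⁻¹)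
      = (↑(n+1) : ℝ≥0∞)⁻¹ * q := by
    have hc : ((n : ℝ≥0∞) + 1) = (↑(n+1) : ℝ≥0∞) := by push_cast; ring
    rw [hc, mul_comm ((↑(n+1) : ℝ≥0∞)⁻¹ * q) _, ← mul_assoc,
      ENNReal.mul_inv_cancel (by exact_mod_cast Nat.succ_ne_zero n)
        (ENNReal.natCast_ne_top (n+1)), one_mul]
  have hEcj : ∀ j, μ (Eᶜ ∩ U ⁻¹' {j}) = μ Eᶜ * (↑(n+1) : ℝ≥0∞)⁻¹ := by
    intro j
    have hadd : μ (U ⁻¹' {j} ∩ E) + μ (U ⁻¹' {j} \ E) = μ (U ⁻¹' {j}) :=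
      measure_inter_add_diff _ hEm
    have hUj : μ (U ⁻¹' {j}) = (↑(n+1) : ℝ≥0∞)⁻¹ := by
      rw [← Measure.map_apply hU (measurableSet_singleton j)]
      exact hνUj j
    have hdiff : Eᶜ ∩ U ⁻¹' {j} = U ⁻¹' {j} \ E := by
      rw [Set.diff_eq, Set.inter_comm]
    rw [hdiff]
    have h1 : μ (U ⁻¹' {j} ∩ E) = (↑(n+1) : ℝ≥0∞)⁻¹ * q := by
      rw [Set.inter_comm]; exact hEq j
    rw [h1, hUj] at hadd
    rw [hμEc]
    have hfin : (↑(n+1) : ℝ≥0∞)⁻¹ * q ≠ ⊤ := ENNReal.mul_ne_top (by simp) hq_ne_top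
    have h2 : μ (U ⁻¹' {j} \ E) = (↑(n+1) : ℝ≥0∞)⁻¹ - (↑(n+1) : ℝ≥0∞)⁻¹ * q :=
      ENNReal.eq_sub_of_add_eq hfin (by rw [add_comm]; exact hadd)
    rw [h2, ENNReal.sub_mul (fun _ _ => by simp), one_mul, mul_comm q _]
  have hJ : μ.map (fun ω => (L' ω, U ω)) = ρ.withDensity f := by
    refine Measure.ext fun s hs => ?_
    rw [hL'def]
    rw [aux_map_pair μ hU hEm hs]
    rw [hρdef, hfdef]
    rw [aux_withDensity_apply (μ.map L') νU hs]
    refine Finset.sum_congr rfl fun j _ => ?_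
    congr 1
    · by_cases hmem : ((Pi.single j 1 : Fin (n+1) → ℝ), j) ∈ s
      · rw [if_pos hmem, if_pos hmem]
        rw [hL'def] at *
        rw [aux_map_L'_single μ hU hEm j, hνUj j, hEq j, hcastinv, ← hEq j]
      · rw [if_neg hmem, if_neg hmem]
    · by_cases hmem : ((0 : Fin (n+1) → ℝ), j) ∈ s
      · rw [if_pos hmem, if_pos hmem]
        rw [aux_map_L'_zero μ hU hEm, hνUj j, hEcj j]
      · rw [if_neg hmem, if_neg hmem]
  -- KL divergence computation
  have hJA₁ : μ.map (fun ω => (L' ω, U ω))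
      {x : (Fin (n+1) → ℝ) × Fin (n+1) | x.1 = Pi.single x.2 1} = q := by
    rw [hL'def, aux_map_pair μ hU hEm hA₁m]
    refine Eq.trans (Finset.sum_congr rfl fun j _ => ?_) hsum
    rw [if_pos (show ((Pi.single j 1 : Fin (n+1) → ℝ), j)
        ∈ {x : (Fin (n+1) → ℝ) × Fin (n+1) | x.1 = Pi.single x.2 1} from rfl),
      if_neg (show ¬ ((0 : Fin (n+1) → ℝ), j)
        ∈ {x : (Fin (n+1) → ℝ) × Fin (n+1) | x.1 = Pi.single x.2 1}
        from fun h => aux_single_ne_zero j (Eq.symm h)), add_zero, hEq j]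
  have hJcompl : μ.map (fun ω => (L' ω, U ω))
      (({x : (Fin (n+1) → ℝ) × Fin (n+1) | x.1 = 0}
        ∪ {x : (Fin (n+1) → ℝ) × Fin (n+1) | x.1 = Pi.single x.2 1})ᶜ) = 0 := by
    rw [hL'def, aux_map_pair μ hU hEm (hA₀m.union hA₁m).compl]
    refine Finset.sum_eq_zero fun j _ => ?_
    rw [if_neg (fun h => h (Set.mem_union_right _ rfl)),
      if_neg (fun h => h (Set.mem_union_left _ rfl)), add_zero]
  have hac : μ.map (fun ω => (L' ω, U ω)) ≪ ρ := by
    rw [hJ]; exact withDensity_absolutelyContinuous ρ f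
  have hrnρ : (μ.map (fun ω => (L' ω, U ω))).rnDeriv ρ =ᵐ[ρ] f := by
    rw [hJ]; exact Measure.rnDeriv_withDensity ρ hfm
  have hrnJ : (μ.map (fun ω => (L' ω, U ω))).rnDeriv ρ =ᵐ[μ.map (fun ω => (L' ω, U ω))] f :=
    hac.ae_eq hrnρ
  have hmemae : ∀ᵐ x ∂(μ.map (fun ω => (L' ω, U ω))),
      x ∈ {x : (Fin (n+1) → ℝ) × Fin (n+1) | x.1 = 0}
        ∪ {x : (Fin (n+1) → ℝ) × Fin (n+1) | x.1 = Pi.single x.2 1} := by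
    rw [ae_iff]
    convert hJcompl using 2
    rfl
  have hgae : (fun x => Real.log (((μ.map (fun ω => (L' ω, U ω))).rnDeriv ρ x).toReal))
      =ᵐ[μ.map (fun ω => (L' ω, U ω))]
        ({x : (Fin (n+1) → ℝ) × Fin (n+1) | x.1 = Pi.single x.2 1}.indicator
          (fun _ => Real.log ((n:ℝ) + 1))) := by
    filter_upwards [hrnJ, hmemae] with x hx hmem
    rw [hx]
    rcases hmem with hmem | hmem
    · have hnot : x ∉ {x : (Fin (n+1) → ℝ) × Fin (n+1) | x.1 = Pi.single x.2 1} := by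
        simp only [Set.mem_setOf_eq] at hmem ⊢
        rw [hmem]
        exact fun h => (aux_single_ne_zero x.2) h.symm
      have hfx : f x = 1 := by
        simp only [hfdef]
        rw [Set.indicator_of_mem hmem, Set.indicator_of_notMem hnot, add_zero]
      rw [hfx, Set.indicator_of_notMem hnot]
      simp
    · have hnot : x ∉ {x : (Fin (n+1) → ℝ) × Fin (n+1) | x.1 = 0} := by
        simp only [Set.mem_setOf_eq] at hmem ⊢
        rw [hmem]
        exact aux_single_ne_zero x.2
      have hfx : f x = (n : ℝ≥0∞) + 1 := by
        simp only [hfdef]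
        rw [Set.indicator_of_notMem hnot, Set.indicator_of_mem hmem, zero_add]
      rw [hfx, Set.indicator_of_mem hmem]
      rw [ENNReal.toReal_add (by simp) (by simp)]
      simp
  have hint : Integrable
      (fun x => Real.log (((μ.map (fun ω => (L' ω, U ω))).rnDeriv ρ x).toReal))
      (μ.map (fun ω => (L' ω, U ω))) :=
    ((integrable_const (Real.log ((n:ℝ) + 1))).indicator hA₁m).congr hgae.symm
  have hintegral : ∫ x, Real.log (((μ.map (fun ω => (L' ω, U ω))).rnDeriv ρ x).toReal)
      ∂(μ.map (fun ω => (L' ω, U ω))) = q.toReal * Real.log ((n:ℝ) + 1) := by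
    rw [integral_congr_ae hgae, integral_indicator_const _ hA₁m, measureReal_def, hJA₁, smul_eq_mul]
  -- the mutual information
  have hmut : mutInfo μ L U = ENNReal.ofReal (q.toReal * Real.log ((n:ℝ) + 1)) := by
    show klDiv' (μ.map (fun ω => (L ω, U ω))) ((μ.map L).prod (μ.map U))
      = ENNReal.ofReal (q.toReal * Real.log ((n:ℝ) + 1))
    rw [hmapPair, hmapL, ← hνU]
    show (if (μ.map (fun ω => (L' ω, U ω))) ≪ ρ ∧ Integrable
        (fun x => Real.log ((((μ.map (fun ω => (L' ω, U ω))).rnDeriv ρ) x).toReal))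
        (μ.map (fun ω => (L' ω, U ω)))
      then ENNReal.ofReal (∫ x, Real.log ((((μ.map (fun ω => (L' ω, U ω))).rnDeriv ρ) x).toReal)
        ∂(μ.map (fun ω => (L' ω, U ω))))
      else ⊤) = ENNReal.ofReal (q.toReal * Real.log ((n:ℝ) + 1))
    rw [if_pos ⟨hac, hint⟩, hintegral]
  -- the left-hand side
  have hinner : ∀ ω, ∫ z, ℓ (W ω) z ∂D
      = (∫⁻ z, ENNReal.ofReal (ℓ (W ω) z) ∂D).toReal := by
    intro ω
    rw [integral_eq_lintegral_of_nonneg_ae]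
    · exact Filter.Eventually.of_forall fun z => by
        rcases hℓbin (W ω) z with h | h <;> simp [h]
    · exact (hℓmeas.comp (measurable_const.prodMk measurable_id)).aestronglyMeasurable
  have hinner_le : ∀ ω, ∫⁻ z, ENNReal.ofReal (ℓ (W ω) z) ∂D ≤ 1 := fun ω =>
    aux_lintegral_le_one D fun z => hℓ'le _ _
  have hGm2 : Measurable fun ω => ∫⁻ z, ENNReal.ofReal (ℓ (W ω) z) ∂D :=
    Measurable.lintegral_prod_right'
      (f := fun p : Ω × (𝒳 × 𝒴) => ENNReal.ofReal (ℓ (W p.1) p.2))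
      (hℓ'm.comp ((hWm.comp measurable_fst).prodMk measurable_snd))
  have hLHS : ENNReal.ofReal (∫ ω, ∫ z, ℓ (W ω) z ∂D ∂μ) = q := by
    have h1 : ∫ ω, ∫ z, ℓ (W ω) z ∂D ∂μ
        = ∫ ω, (∫⁻ z, ENNReal.ofReal (ℓ (W ω) z) ∂D).toReal ∂μ :=
      integral_congr_ae (Filter.Eventually.of_forall fun ω => hinner ω)
    rw [h1, integral_eq_lintegral_of_nonneg_ae
      (Filter.Eventually.of_forall fun ω => ENNReal.toReal_nonneg)
      hGm2.ennreal_toReal.aestronglyMeasurable]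
    have h2 : ∀ ω, ENNReal.ofReal ((∫⁻ z, ENNReal.ofReal (ℓ (W ω) z) ∂D).toReal)
        = ∫⁻ z, ENNReal.ofReal (ℓ (W ω) z) ∂D := fun ω =>
      ENNReal.ofReal_toReal (lt_of_le_of_lt (hinner_le ω) ENNReal.one_lt_top).ne
    rw [lintegral_congr h2, hrisk, ENNReal.ofReal_toReal hq_ne_top]
  -- conclusion
  rw [hLHS, hmut]
  have hc1 : ENNReal.ofReal (q.toReal * Real.log ((n:ℝ) + 1))
      = q * ENNReal.ofReal (Real.log ((n:ℝ) + 1)) := by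
    rw [ENNReal.ofReal_mul ENNReal.toReal_nonneg, ENNReal.ofReal_toReal hq_ne_top]
  rw [hc1, mul_div_assoc,
    ENNReal.div_self ((ENNReal.ofReal_pos.mpr hlogpos).ne') ENNReal.ofReal_ne_top, mul_one]
end

section
/- Let n ∈ ℕ, let the loss ℓ take values in {0,1}, and let A_n be an interpolating learning algorithm with expected risk R = R_D(A_n). Then the (unconditional) entropy of the loss vector L is H(L) = −(1−R) log(1−R) − R log(R/(n+1)), with the conventions 0 log 0 = 0. -/
open MeasureTheory ProbabilityTheory Real
open scoped ENNReal NNReal Classical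

/- ### Auxiliary lemmas -/

/-- For a `{0,1}`-valued function, the measure of `{f = 1}` is the lower integral of `f`. -/
lemma meas_eq_lintegral_ofReal' {α : Type*} [MeasurableSpace α] (m : Measure α) (f : α → ℝ)
    (hf : Measurable f) (h01 : ∀ x, f x = 0 ∨ f x = 1) :
    m {x | f x = 1} = ∫⁻ x, ENNReal.ofReal (f x) ∂m := by
  have hs : MeasurableSet {x | f x = 1} := hf (measurableSet_singleton 1)
  rw [← lintegral_indicator_one hs]
  refine lintegral_congr fun x => ?_
  rcases h01 x with h | h <;> simp [Set.indicator, h]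

/-- Two sets that agree on a conull set have equal measure. -/
lemma meas_congr_of_null_compl' {α : Type*} [MeasurableSpace α] {m : Measure α} {G A B : Set α}
    (hG : m Gᶜ = 0) (h : A ∩ G = B ∩ G) : m A = m B := by
  have key : ∀ X Y : Set α, X ∩ G = Y ∩ G → m X ≤ m Y := by
    intro X Y hXY
    calc m X ≤ m ((X ∩ G) ∪ Gᶜ) := by
          refine measure_mono fun x hx => ?_
          by_cases hxG : x ∈ G
          · exact Or.inl ⟨hx, hxG⟩
          · exact Or.inr hxG
      _ ≤ m (X ∩ G) + m Gᶜ := measure_union_le _ _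
      _ = m (Y ∩ G) := by rw [hXY, hG, add_zero]
      _ ≤ m Y := measure_mono Set.inter_subset_left
  exact le_antisymm (key A B h) (key B A h.symm)

/-- Measure of a set prescribing the middle coordinate of a triple product. -/
lemma measure_mid' {α β γ : Type*} [MeasurableSpace α] [MeasurableSpace β] [MeasurableSpace γ]
    [MeasurableSingletonClass β]
    (μa : Measure α) (μb : Measure β) (μc : Measure γ) [SFinite μb] [SFinite μc]
    (b₀ : β) (C : Set (α × γ)) (hC : MeasurableSet C) :
    ((μa.prod μb).prod μc) {p : (α × β) × γ | p.1.2 = b₀ ∧ (p.1.1, p.2) ∈ C}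
      = μb {b₀} * (μa.prod μc) C := by
  have hb : MeasurableSet ({b₀} : Set β) := measurableSet_singleton b₀
  have hmeas : MeasurableSet {p : (α × β) × γ | p.1.2 = b₀ ∧ (p.1.1, p.2) ∈ C} := by
    have : {p : (α × β) × γ | p.1.2 = b₀ ∧ (p.1.1, p.2) ∈ C}
        = ((fun p : (α × β) × γ => p.1.2) ⁻¹' {b₀})
          ∩ ((fun p : (α × β) × γ => (p.1.1, p.2)) ⁻¹' C) := rfl
    rw [this]
    exact (measurable_fst.snd hb).inter ((measurable_fst.fst.prodMk measurable_snd) hC)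
  rw [Measure.prod_apply hmeas]
  have hpt : ∀ ab : α × β,
      μc (Prod.mk ab ⁻¹' {p : (α × β) × γ | p.1.2 = b₀ ∧ (p.1.1, p.2) ∈ C})
        = μc (Prod.mk ab.1 ⁻¹' C) * ({b₀} : Set β).indicator 1 ab.2 := by
    intro ab
    by_cases h : ab.2 = b₀
    · simp only [Set.indicator_of_mem (Set.mem_singleton_iff.mpr h), Pi.one_apply, mul_one]
      congr 1
      ext r
      simp [h]
    · have h2 : (Prod.mk ab ⁻¹' {p : (α × β) × γ | p.1.2 = b₀ ∧ (p.1.1, p.2) ∈ C}) = ∅ := by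
        ext r; simp [h]
      rw [h2, Set.indicator_of_notMem (by simpa using h), mul_zero, measure_empty]
  rw [lintegral_congr hpt]
  have hmg : Measurable fun a : α => μc (Prod.mk a ⁻¹' C) := measurable_measure_prodMk_left hC
  have haem : AEMeasurable (fun ab : α × β => μc (Prod.mk ab.1 ⁻¹' C)
      * ({b₀} : Set β).indicator 1 ab.2) (μa.prod μb) :=
    ((hmg.comp measurable_fst).mul
      ((measurable_one.indicator hb).comp measurable_snd)).aemeasurable
  rw [lintegral_prod _ haem]
  have hinner : ∀ a : α, ∫⁻ b, μc (Prod.mk a ⁻¹' C) * ({b₀} : Set β).indicator 1 b ∂μb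
      = μc (Prod.mk a ⁻¹' C) * μb {b₀} := by
    intro a
    rw [lintegral_const_mul _ (measurable_one.indicator hb), lintegral_indicator_one hb]
  rw [lintegral_congr hinner, lintegral_mul_const _ hmg, ← Measure.prod_apply hC, mul_comm]


/-- For `{0,1}`-valued loss and an interpolating algorithm with expected risk `R`, the entropy
of the loss vector is `H(L) = -(1-R) log (1-R) - R log (R/(n+1))` (with `0 log 0 = 0`). -/
theorem entropy_lossVector_eq
    {Ω 𝒳 𝒴 ℋ R : Type*} [MeasurableSpace Ω] [MeasurableSpace 𝒳] [MeasurableSpace 𝒴]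
    [MeasurableSpace ℋ] [MeasurableSpace R]
    (μ : Measure Ω) [IsProbabilityMeasure μ]
    (D : Measure (𝒳 × 𝒴)) [IsProbabilityMeasure D]
    (n : ℕ)
    -- the loss function
    (ℓ : ℋ → 𝒳 × 𝒴 → ℝ) (hℓmeas : Measurable (Function.uncurry ℓ))
    -- the (possibly randomized) learning algorithm
    (A : (Fin n → 𝒳 × 𝒴) → R → ℋ) (hA : Measurable (Function.uncurry A))
    -- the supersample, the held-out index, and the internal randomness of the algorithm
    (Zt : Ω → Fin (n+1) → 𝒳 × 𝒴) (hZt : Measurable Zt)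
    (U : Ω → Fin (n+1)) (hU : Measurable U)
    (ξ : Ω → R) (hξ : Measurable ξ)
    (hiid : μ.map Zt = Measure.pi fun _ : Fin (n+1) => D)
    (hUunif : ∀ i, μ {ω | U ω = i} = (↑(n+1) : ℝ≥0∞)⁻¹)
    (hUindep : IndepFun U Zt μ)
    (hξindep : IndepFun ξ (fun ω => (Zt ω, U ω)) μ)
    -- the output classifier `W = A(S_n)` on the training sample `S_n = Z̃₋ᵤ`
    (W : Ω → ℋ) (hW : ∀ ω, W ω = A ((U ω).removeNth (Zt ω)) (ξ ω))
    -- the loss vector `L` on the supersample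
    (L : Ω → Fin (n+1) → ℝ) (hL : ∀ ω i, L ω i = ℓ (W ω) (Zt ω i))
    (hℓbin : ∀ h z, ℓ h z = 0 ∨ ℓ h z = 1)
    -- `A` is interpolating: the empirical risk on the training sample vanishes a.s.
    (hinterp : ∀ᵐ ω ∂μ, (n : ℝ)⁻¹ * ∑ i : Fin n, ℓ (W ω) ((U ω).removeNth (Zt ω) i) = 0)
    -- `Rv` is the expected risk of the algorithm
    (Rv : ℝ) (hRv : Rv = ∫ ω, ∫ z, ℓ (W ω) z ∂D ∂μ) :
    measEntropy (μ.map L)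
      = ENNReal.ofReal (-(1 - Rv) * Real.log (1 - Rv) - Rv * Real.log (Rv / (n + 1))) := by
  classical
  -- measures
  set πZ : Measure (Fin (n+1) → 𝒳 × 𝒴) := Measure.pi fun _ => D with hπZ
  set πZn : Measure (Fin n → 𝒳 × 𝒴) := Measure.pi fun _ => D with hπZn
  set πU : Measure (Fin (n+1)) := μ.map U with hπU
  set πξ : Measure R := μ.map ξ with hπξ
  haveI : IsProbabilityMeasure πU := Measure.isProbabilityMeasure_map hU.aemeasurable
  haveI : IsProbabilityMeasure πξ := Measure.isProbabilityMeasure_map hξ.aemeasurable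
  -- maps
  set T : Ω → ((Fin (n+1) → 𝒳 × 𝒴) × Fin (n+1)) × R := fun ω => ((Zt ω, U ω), ξ ω) with hTdef
  set Φ : ((Fin (n+1) → 𝒳 × 𝒴) × Fin (n+1)) × R → (Fin (n+1) → ℝ) :=
    fun p => fun i => ℓ (A (p.1.2.removeNth p.1.1) p.2) (p.1.1 i) with hΦdef
  -- measurability
  have hcoord : ∀ σ : Fin (n+1) → Fin (n+1),
      Measurable fun q : (Fin (n+1) → 𝒳 × 𝒴) × Fin (n+1) => q.1 (σ q.2) :=
    fun σ => measurable_from_prod_countable_left fun u => measurable_pi_apply (σ u)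
  have hremove : Measurable fun q : (Fin (n+1) → 𝒳 × 𝒴) × Fin (n+1) => q.2.removeNth q.1 := by
    refine measurable_pi_lambda _ fun k => ?_
    exact hcoord (fun u => u.succAbove k)
  have hAp : Measurable fun p : ((Fin (n+1) → 𝒳 × 𝒴) × Fin (n+1)) × R =>
      A (p.1.2.removeNth p.1.1) p.2 :=
    hA.comp ((hremove.comp measurable_fst).prodMk measurable_snd)
  have hΦ : Measurable Φ := by
    refine measurable_pi_lambda _ fun i => ?_
    exact hℓmeas.comp (hAp.prodMk ((hcoord fun _ => i).comp measurable_fst))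
  have hT : Measurable T := (hZt.prodMk hU).prodMk hξ
  have hWmeas : Measurable W := by
    have : W = fun ω => A ((U ω).removeNth (Zt ω)) (ξ ω) := funext hW
    rw [this]
    exact hA.comp ((hremove.comp (hZt.prodMk hU)).prodMk hξ)
  have hLΦ : L = Φ ∘ T := by
    funext ω i
    simp only [Function.comp_apply, hΦdef, hTdef]
    rw [hL ω i, hW ω]
  have hLmeas : Measurable L := by rw [hLΦ]; exact hΦ.comp hT
  haveI : IsProbabilityMeasure (μ.map L) := Measure.isProbabilityMeasure_map hLmeas.aemeasurable
  -- the law of `T`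
  have hTlaw : μ.map T = (πZ.prod πU).prod πξ := by
    have h1 : μ.map (fun ω => (Zt ω, U ω)) = (μ.map Zt).prod πU :=
      (indepFun_iff_map_prod_eq_prod_map_map hZt.aemeasurable hU.aemeasurable).mp hUindep.symm
    have h2 : μ.map T = (μ.map (fun ω => (Zt ω, U ω))).prod πξ :=
      (indepFun_iff_map_prod_eq_prod_map_map (hZt.prodMk hU).aemeasurable
        hξ.aemeasurable).mp hξindep.symm
    rw [h2, h1, hiid]
  set ν : Measure (Fin (n+1) → ℝ) := μ.map L with hν
  have hνΛ : ν = ((πZ.prod πU).prod πξ).map Φ := by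
    rw [hν, hLΦ, ← Measure.map_map hΦ hT, hTlaw]
  -- uniformity of U
  have hπUi : ∀ i, πU {i} = (↑(n+1) : ℝ≥0∞)⁻¹ := by
    intro i
    rw [hπU, Measure.map_apply hU (measurableSet_singleton i)]
    exact hUunif i
  have hUsum : ∑ u : Fin (n+1), πU {u} = 1 := by
    simp only [hπUi]
    rw [Finset.sum_const, Finset.card_univ, Fintype.card_fin, nsmul_eq_mul]
    rw [ENNReal.mul_inv_cancel (by exact_mod_cast Nat.succ_ne_zero n) (ENNReal.natCast_ne_top _)]
  -- the test events
  set C : Fin (n+1) → Set ((Fin (n+1) → 𝒳 × 𝒴) × R) :=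
    fun i => {q | ℓ (A (i.removeNth q.1) q.2) (q.1 i) = 1} with hCdef
  have hremove' : ∀ i : Fin (n+1),
      Measurable fun z : Fin (n+1) → 𝒳 × 𝒴 => i.removeNth z :=
    fun i => measurable_pi_lambda _ fun k => measurable_pi_apply _
  have hCfun : ∀ i : Fin (n+1), Measurable fun q : (Fin (n+1) → 𝒳 × 𝒴) × R =>
      ℓ (A (i.removeNth q.1) q.2) (q.1 i) := by
    intro i
    have h1 : Measurable fun q : (Fin (n+1) → 𝒳 × 𝒴) × R => A (i.removeNth q.1) q.2 :=
      hA.comp (((hremove' i).comp measurable_fst).prodMk measurable_snd)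
    exact hℓmeas.comp (h1.prodMk ((measurable_pi_apply i).comp measurable_fst))
  have hCmeas : ∀ i, MeasurableSet (C i) := fun i => (hCfun i) (measurableSet_singleton 1)
  -- the risk functional
  set F : (𝒳 × 𝒴) → (Fin n → 𝒳 × 𝒴) × R → ℝ≥0∞ :=
    fun w p => ENNReal.ofReal (ℓ (A p.1 p.2) w) with hFdef
  have hFmeas : Measurable fun x : (𝒳 × 𝒴) × ((Fin n → 𝒳 × 𝒴) × R) => F x.1 x.2 :=
    ENNReal.measurable_ofReal.comp (hℓmeas.comp ((hA.comp measurable_snd).prodMk measurable_fst))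
  set ρ : ℝ≥0∞ := ∫⁻ p, ∫⁻ w, F w p ∂D ∂(πZn.prod πξ) with hρdef
  -- the inner integral as a function
  have hg2meas : Measurable fun wz : (𝒳 × 𝒴) × (Fin n → 𝒳 × 𝒴) =>
      ∫⁻ r, F wz.1 (wz.2, r) ∂πξ := by
    apply Measurable.lintegral_prod_right
    exact hFmeas.comp ((measurable_fst.comp measurable_fst).prodMk
      ((measurable_snd.comp measurable_fst).prodMk measurable_snd))
  -- symmetry: each test event has probability ρ
  have hqi : ∀ i : Fin (n+1), (πZ.prod πξ) (C i) = ρ := by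
    intro i
    rw [Measure.prod_apply (hCmeas i)]
    have h1 : ∀ z : Fin (n+1) → 𝒳 × 𝒴,
        πξ (Prod.mk z ⁻¹' C i) = ∫⁻ r, ENNReal.ofReal (ℓ (A (i.removeNth z) r) (z i)) ∂πξ := by
      intro z
      exact meas_eq_lintegral_ofReal' _ _
        (hℓmeas.comp ((hA.comp (measurable_const.prodMk measurable_id)).prodMk
          measurable_const)) (fun r => hℓbin _ _)
    rw [lintegral_congr h1]
    have hψ := measurePreserving_piFinSuccAbove (fun _ : Fin (n+1) => D) i
    have h2 : (∫⁻ z, (∫⁻ r, ENNReal.ofReal (ℓ (A (i.removeNth z) r) (z i)) ∂πξ) ∂πZ)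
        = ∫⁻ z, (fun wz : (𝒳 × 𝒴) × (Fin n → 𝒳 × 𝒴) => ∫⁻ r, F wz.1 (wz.2, r) ∂πξ)
            ((MeasurableEquiv.piFinSuccAbove (fun _ : Fin (n+1) => 𝒳 × 𝒴) i) z) ∂πZ := by
      refine lintegral_congr fun z => ?_
      rfl
    rw [h2, hψ.lintegral_comp hg2meas]
    rw [lintegral_prod _ (hg2meas.aemeasurable)]
    have h3 : ∀ w : 𝒳 × 𝒴, (∫⁻ zr, ∫⁻ r, F w (zr, r) ∂πξ ∂πZn)
        = ∫⁻ p, F w p ∂(πZn.prod πξ) := by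
      intro w
      rw [lintegral_prod (fun p => F w p)
        ((hFmeas.comp (measurable_const.prodMk measurable_id)).aemeasurable)]
    rw [lintegral_congr h3]
    rw [lintegral_lintegral_swap hFmeas.aemeasurable, hρdef]
  haveI : IsProbabilityMeasure (πZ.prod πξ) := by infer_instance
  have hρ1 : ρ ≤ 1 := by
    rw [← hqi 0]
    exact prob_le_one
  have hρtop : ρ ≠ ∞ := (lt_of_le_of_lt hρ1 ENNReal.one_lt_top).ne
  -- the risk equals ρ
  set DS : ℋ → ℝ≥0∞ := fun h => D {w | ℓ h w = 1} with hDSdef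
  have hDSmeas : Measurable DS := by
    have : DS = fun h => D (Prod.mk h ⁻¹' (Function.uncurry ℓ ⁻¹' {1})) := rfl
    rw [this]
    exact measurable_measure_prodMk_left (hℓmeas (measurableSet_singleton 1))
  have hDSle : ∀ h, DS h ≤ 1 := fun h => prob_le_one
  have hπmap : ∀ u : Fin (n+1), πZ.map (fun z => u.removeNth z) = πZn := by
    intro u
    have hψ := (measurePreserving_piFinSuccAbove (fun _ : Fin (n+1) => D) u).map_eq
    have hcomp : (fun z : Fin (n+1) → 𝒳 × 𝒴 => u.removeNth z)
        = Prod.snd ∘ (MeasurableEquiv.piFinSuccAbove (fun _ : Fin (n+1) => 𝒳 × 𝒴) u) := rfl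
    rw [hcomp, ← Measure.map_map measurable_snd (MeasurableEquiv.measurable _), hψ,
      Measure.map_snd_prod, measure_univ, one_smul]
  have hDSrw : ∀ h, DS h = ∫⁻ w, ENNReal.ofReal (ℓ h w) ∂D := by
    intro h
    exact meas_eq_lintegral_ofReal' _ _
      (hℓmeas.comp (measurable_const.prodMk measurable_id)) (fun w => hℓbin _ _)
  have hh2meas : Measurable fun zr : Fin n → 𝒳 × 𝒴 => ∫⁻ r, DS (A zr r) ∂πξ := by
    apply Measurable.lintegral_prod_right
    exact hDSmeas.comp (hA.comp (measurable_fst.prodMk measurable_snd))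
  have hterm : ∀ u : Fin (n+1),
      (∫⁻ z, (∫⁻ r, DS (A (u.removeNth z) r) ∂πξ) ∂πZ) = ρ := by
    intro u
    rw [← lintegral_map hh2meas (hremove' u), hπmap u]
    have h4 : ∀ zr : Fin n → 𝒳 × 𝒴, (∫⁻ r, DS (A zr r) ∂πξ)
        = ∫⁻ r, ∫⁻ w, F w (zr, r) ∂D ∂πξ := by
      intro zr
      refine lintegral_congr fun r => ?_
      rw [hDSrw]
    rw [lintegral_congr h4]
    have hρmeas : Measurable fun p : (Fin n → 𝒳 × 𝒴) × R => ∫⁻ w, F w p ∂D :=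
      Measurable.lintegral_prod_right (hFmeas.comp (measurable_snd.prodMk measurable_fst))
    rw [hρdef, lintegral_prod (fun p => ∫⁻ w, F w p ∂D) hρmeas.aemeasurable]

  have hRis : ∫⁻ ω, DS (W ω) ∂μ = ρ := by
    have hWT : ∀ ω, DS (W ω) = (fun p : ((Fin (n+1) → 𝒳 × 𝒴) × Fin (n+1)) × R =>
        DS (A (p.1.2.removeNth p.1.1) p.2)) (T ω) := by
      intro ω; rw [hW ω]
    have hmap := lintegral_map (μ := μ)
      (f := fun p : ((Fin (n+1) → 𝒳 × 𝒴) × Fin (n+1)) × R =>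
      DS (A (p.1.2.removeNth p.1.1) p.2)) (g := T) (hDSmeas.comp hAp) hT
    rw [hTlaw] at hmap
    rw [lintegral_congr hWT, ← hmap]
    rw [lintegral_prod (fun p : ((Fin (n+1) → 𝒳 × 𝒴) × Fin (n+1)) × R =>
      DS (A (p.1.2.removeNth p.1.1) p.2)) ((hDSmeas.comp hAp).aemeasurable)]
    have h5 : ∀ zu : (Fin (n+1) → 𝒳 × 𝒴) × Fin (n+1),
        (∫⁻ r, DS (A (zu.2.removeNth zu.1) r) ∂πξ)
          = (fun zu : (Fin (n+1) → 𝒳 × 𝒴) × Fin (n+1) =>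
              ∫⁻ r, DS (A (zu.2.removeNth zu.1) r) ∂πξ) zu := fun _ => rfl
    have hmeas5 : Measurable fun zu : (Fin (n+1) → 𝒳 × 𝒴) × Fin (n+1) =>
        ∫⁻ r, DS (A (zu.2.removeNth zu.1) r) ∂πξ := hh2meas.comp hremove
    rw [lintegral_prod (fun zu : (Fin (n+1) → 𝒳 × 𝒴) × Fin (n+1) =>
      ∫⁻ r, DS (A (zu.2.removeNth zu.1) r) ∂πξ) hmeas5.aemeasurable]
    have h6 : ∀ z : Fin (n+1) → 𝒳 × 𝒴,
        (∫⁻ u, (∫⁻ r, DS (A (u.removeNth z) r) ∂πξ) ∂πU)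
          = ∑ u : Fin (n+1), (∫⁻ r, DS (A (u.removeNth z) r) ∂πξ) * πU {u} :=
      fun z => lintegral_fintype _
    rw [lintegral_congr h6]
    rw [show (∫⁻ z, ∑ u : Fin (n+1),
        (∫⁻ r, DS (A (u.removeNth z) r) ∂πξ) * πU {u} ∂πZ)
      = ∑ u : Fin (n+1), ∫⁻ z, (∫⁻ r, DS (A (u.removeNth z) r) ∂πξ) * πU {u} ∂πZ from
      lintegral_finset_sum _ (fun u _ => (hh2meas.comp (hremove' u)).mul_const _)]
    have h7 : ∀ u : Fin (n+1),
        (∫⁻ z, (∫⁻ r, DS (A (u.removeNth z) r) ∂πξ) * πU {u} ∂πZ) = ρ * πU {u} := by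
      intro u
      rw [lintegral_mul_const (f := fun z : Fin (n+1) → 𝒳 × 𝒴 => ∫⁻ r, DS (A (u.removeNth z) r) ∂πξ) _
        (by exact hh2meas.comp (hremove' u)), hterm u]
    rw [Finset.sum_congr rfl (fun u _ => h7 u), ← Finset.mul_sum, hUsum, mul_one]
  have hRvρ : Rv = ρ.toReal := by
    rw [hRv]
    have h1 : ∀ ω, (∫ z, ℓ (W ω) z ∂D) = (DS (W ω)).toReal := by
      intro ω
      have hind : (fun z => ℓ (W ω) z)
          = Set.indicator {w | ℓ (W ω) w = 1} (fun _ => (1:ℝ)) := by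
        funext z
        rcases hℓbin (W ω) z with h | h
        · rw [h, Set.indicator_of_notMem (by simp [h])]
        · rw [h, Set.indicator_of_mem (by simp [h])]
      rw [hind]
      exact integral_indicator_one
        ((hℓmeas.comp (measurable_const.prodMk measurable_id)) (measurableSet_singleton 1))
    simp_rw [h1]
    rw [integral_toReal (f := fun ω => DS (W ω))
      (by exact (hDSmeas.comp hWmeas).aemeasurable)
      (ae_of_all _ fun ω => measure_lt_top _ _), hRis]
  have hRv0 : 0 ≤ Rv := hRvρ ▸ ENNReal.toReal_nonneg
  have hRv1 : Rv ≤ 1 := by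
    rw [hRvρ]
    simpa using ENNReal.toReal_mono ENNReal.one_ne_top hρ1
  -- the interpolation event
  have hinterpG : ∀ᵐ ω ∂μ, ∀ j : Fin n, ℓ (W ω) ((U ω).removeNth (Zt ω) j) = 0 := by
    filter_upwards [hinterp] with ω hω j
    have hn : (n:ℝ) ≠ 0 := Nat.cast_ne_zero.mpr j.pos.ne'
    have hsum : ∑ i : Fin n, ℓ (W ω) ((U ω).removeNth (Zt ω) i) = 0 := by
      rcases mul_eq_zero.mp hω with h | h
      · exact absurd h (inv_ne_zero hn)
      · exact h
    have hnonneg : ∀ i ∈ Finset.univ, (0:ℝ) ≤ ℓ (W ω) ((U ω).removeNth (Zt ω) i) := by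
      intro i _
      rcases hℓbin (W ω) ((U ω).removeNth (Zt ω) i) with h | h <;> rw [h] <;> norm_num
    exact (Finset.sum_eq_zero_iff_of_nonneg hnonneg).mp hsum j (Finset.mem_univ j)
  set G : Set (((Fin (n+1) → 𝒳 × 𝒴) × Fin (n+1)) × R) :=
    {p | ∀ j : Fin n, ℓ (A (p.1.2.removeNth p.1.1) p.2) (p.1.2.removeNth p.1.1 j) = 0}
    with hGdef
  have hGmeas : MeasurableSet G := by
    have : G = ⋂ j : Fin n, (fun p : ((Fin (n+1) → 𝒳 × 𝒴) × Fin (n+1)) × R =>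
        ℓ (A (p.1.2.removeNth p.1.1) p.2) (p.1.2.removeNth p.1.1 j)) ⁻¹' {0} := by
      ext p
      simp [hGdef, Set.mem_iInter]
    rw [this]
    exact MeasurableSet.iInter fun j =>
      (hℓmeas.comp (hAp.prodMk ((hcoord (fun u => u.succAbove j)).comp measurable_fst)))
        (measurableSet_singleton 0)
  have hGnull : ((πZ.prod πU).prod πξ) Gᶜ = 0 := by
    rw [← hTlaw, Measure.map_apply hT hGmeas.compl]
    have hae : ∀ᵐ ω ∂μ, T ω ∈ G := by
      filter_upwards [hinterpG] with ω hω j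
      have := hω j
      rw [hW ω] at this
      exact this
    have : T ⁻¹' Gᶜ = {ω | ¬ T ω ∈ G} := rfl
    rw [this, ← ae_iff]
    exact hae
  -- basis vectors
  set e : Fin (n+1) → (Fin (n+1) → ℝ) := fun i => Pi.single i 1 with hedef
  have hνei : ∀ i, ν {e i} = (↑(n+1) : ℝ≥0∞)⁻¹ * ρ := by
    intro i
    rw [hνΛ, Measure.map_apply hΦ (measurableSet_singleton (e i))]
    have hset : Φ ⁻¹' {e i} ∩ G
        = {p : ((Fin (n+1) → 𝒳 × 𝒴) × Fin (n+1)) × R | p.1.2 = i ∧ (p.1.1, p.2) ∈ C i} ∩ G := by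
      ext p
      obtain ⟨⟨z, u⟩, r⟩ := p
      simp only [Set.mem_inter_iff, Set.mem_preimage, Set.mem_singleton_iff, Set.mem_setOf_eq,
        hGdef, hCdef, hΦdef, hedef]
      constructor
      · rintro ⟨hΦp, hGp⟩
        have hui : u = i := by
          by_contra hne
          obtain ⟨j, hj⟩ := Fin.exists_succAbove_eq (show i ≠ u from fun h => hne h.symm)
          have h0 := hGp j
          rw [show (u.removeNth z) j = z (u.succAbove j) from rfl, hj] at h0
          have h1 : ℓ (A (u.removeNth z) r) (z i) = 1 := by
            have := congrFun hΦp i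
            simpa [Pi.single_eq_same] using this
          rw [h0] at h1
          norm_num at h1
        subst hui
        refine ⟨⟨rfl, ?_⟩, hGp⟩
        have := congrFun hΦp u
        simpa [Pi.single_eq_same] using this
      · rintro ⟨⟨hu, hC1⟩, hGp⟩
        subst hu
        refine ⟨?_, hGp⟩
        funext k
        by_cases hk : k = u
        · subst hk
          simpa [Pi.single_eq_same] using hC1
        · obtain ⟨j, hj⟩ := Fin.exists_succAbove_eq hk
          have h0 := hGp j
          rw [show (u.removeNth z) j = z (u.succAbove j) from rfl, hj] at h0
          rw [h0]
          exact (Pi.single_eq_of_ne (M := fun _ : Fin (n+1) => ℝ) hk 1).symm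
    rw [meas_congr_of_null_compl' hGnull hset,
      measure_mid' πZ πU πξ i (C i) (hCmeas i), hqi i, hπUi i]
  -- the support
  have heinj : Function.Injective e := by
    intro a b hab
    by_contra hne
    have h2 : Pi.single (M := fun _ : Fin (n+1) => ℝ) a 1 a
        = Pi.single (M := fun _ : Fin (n+1) => ℝ) b 1 a := by
      rw [hedef] at hab
      exact congrFun hab a
    rw [Pi.single_eq_same, Pi.single_eq_of_ne hne] at h2
    exact one_ne_zero h2
  have h0ne : (0 : Fin (n+1) → ℝ) ∉ Finset.image e Finset.univ := by
    simp only [Finset.mem_image, not_exists]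
    rintro i ⟨-, hi⟩
    have h2 := congrFun hi i
    simp [hedef] at h2
  set S' : Finset (Fin (n+1) → ℝ) := insert (0 : Fin (n+1) → ℝ) (Finset.image e Finset.univ)
    with hS'def
  have hS'meas : MeasurableSet (↑S' : Set (Fin (n+1) → ℝ)) := S'.finite_toSet.measurableSet
  have haeS : ∀ᵐ ω ∂μ, L ω ∈ (↑S' : Set (Fin (n+1) → ℝ)) := by
    filter_upwards [hinterpG] with ω hω
    rcases hℓbin (W ω) (Zt ω (U ω)) with h0 | h1
    · have hL0 : L ω = 0 := by
        funext k
        by_cases hk : k = U ω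
        · rw [hL ω k, hk]
          exact h0
        · obtain ⟨j, hj⟩ := Fin.exists_succAbove_eq hk
          rw [hL ω k, ← hj]
          exact hω j
      rw [hL0]
      simp [hS'def]
    · have hLe : L ω = e (U ω) := by
        funext k
        by_cases hk : k = U ω
        · subst hk
          have hval : L ω (U ω) = 1 := by rw [hL ω (U ω)]; exact h1
          rw [hval, hedef]
          exact (Pi.single_eq_same (M := fun _ : Fin (n+1) => ℝ) (U ω) 1).symm
        · obtain ⟨j, hj⟩ := Fin.exists_succAbove_eq hk
          have hval : L ω k = 0 := by rw [hL ω k, ← hj]; exact hω j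
          rw [hval, hedef]
          exact (Pi.single_eq_of_ne (M := fun _ : Fin (n+1) => ℝ) hk 1).symm
      rw [hLe]
      simp [hS'def]
  have hcompl : ν ((↑S' : Set (Fin (n+1) → ℝ))ᶜ) = 0 := by
    rw [hν, Measure.map_apply hLmeas hS'meas.compl]
    have : L ⁻¹' (↑S' : Set (Fin (n+1) → ℝ))ᶜ = {ω | ¬ L ω ∈ (↑S' : Set (Fin (n+1) → ℝ))} := rfl
    rw [this, ← ae_iff]
    exact haeS
  have hfull : ν (↑S' : Set (Fin (n+1) → ℝ)) = 1 := (prob_compl_eq_zero_iff hS'meas).mp hcompl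
  have hsingle : ∀ x : Fin (n+1) → ℝ, x ∉ S' → ν {x} = 0 := by
    intro x hx
    refine measure_mono_null ?_ hcompl
    intro y hy
    rw [Set.mem_singleton_iff.mp hy]
    simpa using hx
  have hsumS : ∑ x ∈ S', ν {x} = 1 := by
    have hdisj : (↑S' : Set (Fin (n+1) → ℝ)).PairwiseDisjoint
        (fun x : Fin (n+1) → ℝ => ({x} : Set (Fin (n+1) → ℝ))) := by
      intro x _ y _ hxy
      simp [Set.disjoint_singleton, hxy]
    rw [← measure_biUnion_finset hdisj (fun b _ => measurableSet_singleton b)]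
    have : (⋃ x ∈ S', ({x} : Set (Fin (n+1) → ℝ))) = ↑S' := by
      ext y; simp
    rw [this, hfull]
  have htsum1 : ∑' x : Fin (n+1) → ℝ, ν {x} = 1 := by
    rw [tsum_eq_sum (s := S') (fun x hx => hsingle x hx)]
    exact hsumS
  -- value at 0
  have hsumei : ∑ i : Fin (n+1), ν {e i} = ρ := by
    simp only [hνei]
    rw [Finset.sum_const, Finset.card_univ, Fintype.card_fin, nsmul_eq_mul, ← mul_assoc]
    rw [ENNReal.mul_inv_cancel (by exact_mod_cast Nat.succ_ne_zero n)
      (ENNReal.natCast_ne_top _), one_mul]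
  have hν0val : ν {(0 : Fin (n+1) → ℝ)} = 1 - ρ := by
    have hsum' : ν {(0 : Fin (n+1) → ℝ)} + ρ = 1 := by
      rw [← hsumei, ← hsumS, hS'def, Finset.sum_insert h0ne]
      congr 1
      rw [Finset.sum_image (fun a _ b _ h => heinj h)]
    exact ENNReal.eq_sub_of_add_eq hρtop hsum'
  -- entropy computation
  have htoReal0 : (ν {(0 : Fin (n+1) → ℝ)}).toReal = 1 - Rv := by
    rw [hν0val, ENNReal.toReal_sub_of_le hρ1 ENNReal.one_ne_top, ENNReal.toReal_one, hRvρ]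
  have htoRealei : ∀ i, (ν {e i}).toReal = Rv / (↑n + 1) := by
    intro i
    rw [hνei i, ENNReal.toReal_mul, ENNReal.toReal_inv, ENNReal.toReal_natCast, hRvρ]
    push_cast
    rw [inv_mul_eq_div]
  rw [measEntropy, if_pos (by rw [htsum1, measure_univ])]
  rw [tsum_eq_sum (s := S') (fun x hx => by rw [hsingle x hx]; simp)]
  rw [hS'def, Finset.sum_insert h0ne, Finset.sum_image (fun a _ b _ h => heinj h)]
  rw [htoReal0]
  have hterm2 : ∀ i : Fin (n+1), ENNReal.ofReal (Real.negMulLog ((ν {e i}).toReal))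
      = ENNReal.ofReal (Real.negMulLog (Rv / (↑n + 1))) := by
    intro i; rw [htoRealei i]
  rw [Finset.sum_congr rfl (fun i _ => hterm2 i), Finset.sum_const, Finset.card_univ,
    Fintype.card_fin, nsmul_eq_mul]
  have hc : (0:ℝ) < (n:ℝ) + 1 := by positivity
  have hb0 : 0 ≤ Rv / ((n:ℝ) + 1) := by positivity
  have hb1 : Rv / ((n:ℝ) + 1) ≤ 1 := by
    rw [div_le_one hc]
    nlinarith
  have hnn1 : 0 ≤ Real.negMulLog (1 - Rv) :=
    Real.negMulLog_nonneg (by linarith) (by linarith)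
  have hnn2 : 0 ≤ Real.negMulLog (Rv / ((n:ℝ) + 1)) := Real.negMulLog_nonneg hb0 hb1
  rw [show ((n+1 : ℕ) : ℝ≥0∞) = ENNReal.ofReal ((n+1 : ℕ) : ℝ) from
    (ENNReal.ofReal_natCast _).symm]
  rw [← ENNReal.ofReal_mul (by positivity)]
  rw [← ENNReal.ofReal_add hnn1 (by positivity)]
  congr 1
  have hkey : ((n+1 : ℕ) : ℝ) * (Rv / ((n:ℝ) + 1)) = Rv := by
    push_cast
    field_simp
  rw [Real.negMulLog, Real.negMulLog]
  push_cast
  have h9 : ((n:ℝ) + 1) * (-(Rv / ((n:ℝ)+1)) * Real.log (Rv / ((n:ℝ)+1)))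
      = -Rv * Real.log (Rv / ((n:ℝ)+1)) := by
    field_simp
  rw [h9]
  ring
end

section
/- Let n ∈ ℕ, let the loss ℓ take values in {0,1}, and let A_n be an interpolating learning algorithm with expected risk R = R_D(A_n). Then the conditional entropy of the loss vector L given the held-out index U is H(L | U) = −(1−R) log(1−R) − R log R, with the convention 0 log 0 = 0. -/
open MeasureTheory ProbabilityTheory Real
open scoped ENNReal NNReal Classical

section Aux
open MeasureTheory

open MeasureTheory

lemma measurable_eval_comp' {Ω Z : Type*} [MeasurableSpace Ω] [MeasurableSpace Z] {m : ℕ}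
    {g : Ω → Fin m → Z} (hg : Measurable g) {j : Ω → Fin m} (hj : Measurable j) :
    Measurable fun ω => g ω (j ω) := by
  intro s hs
  have h : (fun ω => g ω (j ω)) ⁻¹' s = ⋃ i, (j ⁻¹' {i} ∩ (fun ω => g ω i) ⁻¹' s) := by
    ext ω
    simp only [Set.mem_preimage, Set.mem_iUnion, Set.mem_inter_iff, Set.mem_singleton_iff]
    exact ⟨fun h => ⟨j ω, rfl, h⟩, by rintro ⟨i, rfl, h⟩; exact h⟩
  rw [h]
  exact MeasurableSet.iUnion fun i => (hj (measurableSet_singleton i)).inter (hg.eval hs)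

lemma integrable_of_le_one' {α : Type*} [MeasurableSpace α] {ν : Measure α} [IsFiniteMeasure ν]
    {f : α → ℝ} (hf : AEStronglyMeasurable f ν) (h0 : ∀ x, 0 ≤ f x) (h1 : ∀ x, f x ≤ 1) :
    Integrable f ν :=
  Integrable.mono' (integrable_const 1) hf (Filter.Eventually.of_forall fun x => by
    rw [Real.norm_eq_abs, abs_of_nonneg (h0 x)]; exact h1 x)

lemma measEntropy_two {γ : Type*} [MeasurableSpace γ] [MeasurableSingletonClass γ]
    {x y : γ} (hxy : x ≠ y) {a b : ℝ≥0∞} (hab : a + b = 1) :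
    measEntropy (a • Measure.dirac x + b • Measure.dirac y)
      = ENNReal.ofReal (Real.negMulLog a.toReal) + ENNReal.ofReal (Real.negMulLog b.toReal) := by
  classical
  set ν := a • Measure.dirac x + b • Measure.dirac y with hν
  have hsingle : ∀ z : γ, ν {z} = (if x = z then a else 0) + (if y = z then b else 0) := by
    intro z
    simp [hν, Measure.dirac_apply, Set.indicator, Set.mem_singleton_iff, mul_ite, mul_one, mul_zero]
  have hx : ν {x} = a := by rw [hsingle]; simp [if_neg (Ne.symm hxy)]
  have hy : ν {y} = b := by rw [hsingle]; simp [if_neg hxy]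
  have hz : ∀ z, z ∉ ({x, y} : Finset γ) → ν {z} = 0 := by
    intro z hzmem
    simp only [Finset.mem_insert, Finset.mem_singleton, not_or] at hzmem
    rw [hsingle]
    rw [if_neg (Ne.symm hzmem.1), if_neg (Ne.symm hzmem.2), add_zero]
  have hxyf : (x : γ) ∉ ({y} : Finset γ) := by simpa using hxy
  have hcond : (∑' z, ν {z}) = ν Set.univ := by
    rw [tsum_eq_sum (s := {x, y}) hz, Finset.sum_insert hxyf, Finset.sum_singleton, hx, hy]
    simp [hν, hab]
  rw [measEntropy, if_pos hcond, tsum_eq_sum (s := {x, y})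
    (fun z hzm => by rw [hz z hzm]; simp),
    Finset.sum_insert hxyf, Finset.sum_singleton, hx, hy]
end Aux

/-- For `{0,1}`-valued loss and an interpolating algorithm with expected risk `R`, the
conditional entropy of the loss vector given the held-out index is
`H(L∣U) = (n+1)⁻¹ ∑ᵢ H(L∣U=i) = -(1-R) log (1-R) - R log R` (with `0 log 0 = 0`). -/
theorem condEntropy_lossVector_eq
    {Ω 𝒳 𝒴 ℋ R : Type*} [MeasurableSpace Ω] [MeasurableSpace 𝒳] [MeasurableSpace 𝒴]
    [MeasurableSpace ℋ] [MeasurableSpace R]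
    (μ : Measure Ω) [IsProbabilityMeasure μ]
    (D : Measure (𝒳 × 𝒴)) [IsProbabilityMeasure D]
    (n : ℕ)
    -- the loss function
    (ℓ : ℋ → 𝒳 × 𝒴 → ℝ) (hℓmeas : Measurable (Function.uncurry ℓ))
    -- the (possibly randomized) learning algorithm
    (A : (Fin n → 𝒳 × 𝒴) → R → ℋ) (hA : Measurable (Function.uncurry A))
    -- the supersample, the held-out index, and the internal randomness of the algorithm
    (Zt : Ω → Fin (n+1) → 𝒳 × 𝒴) (hZt : Measurable Zt)
    (U : Ω → Fin (n+1)) (hU : Measurable U)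
    (ξ : Ω → R) (hξ : Measurable ξ)
    (hiid : μ.map Zt = Measure.pi fun _ : Fin (n+1) => D)
    (hUunif : ∀ i, μ {ω | U ω = i} = (↑(n+1) : ℝ≥0∞)⁻¹)
    (hUindep : IndepFun U Zt μ)
    (hξindep : IndepFun ξ (fun ω => (Zt ω, U ω)) μ)
    -- the output classifier `W = A(S_n)` on the training sample `S_n = Z̃₋ᵤ`
    (W : Ω → ℋ) (hW : ∀ ω, W ω = A ((U ω).removeNth (Zt ω)) (ξ ω))
    -- the loss vector `L` on the supersample
    (L : Ω → Fin (n+1) → ℝ) (hL : ∀ ω i, L ω i = ℓ (W ω) (Zt ω i))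
    (hℓbin : ∀ h z, ℓ h z = 0 ∨ ℓ h z = 1)
    -- `A` is interpolating: the empirical risk on the training sample vanishes a.s.
    (hinterp : ∀ᵐ ω ∂μ, (n : ℝ)⁻¹ * ∑ i : Fin n, ℓ (W ω) ((U ω).removeNth (Zt ω) i) = 0)
    -- `Rv` is the expected risk of the algorithm
    (Rv : ℝ) (hRv : Rv = ∫ ω, ∫ z, ℓ (W ω) z ∂D ∂μ) :
    (↑(n+1) : ℝ≥0∞)⁻¹ * ∑ i : Fin (n+1), measEntropy ((μ[|U ⁻¹' {i}]).map L)
      = ENNReal.ofReal (-(1 - Rv) * Real.log (1 - Rv) - Rv * Real.log Rv) := by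
  classical
  -- basic bounds on ℓ
  have hℓ01 : ∀ h z, 0 ≤ ℓ h z ∧ ℓ h z ≤ 1 := fun h z => by
    rcases hℓbin h z with e | e <;> rw [e] <;> norm_num
  -- measurability of W and L
  have hWm : Measurable W := by
    have hWe : W = fun ω => Function.uncurry A ((U ω).removeNth (Zt ω), ξ ω) := funext hW
    rw [hWe]
    refine hA.comp (Measurable.prodMk ?_ hξ)
    refine measurable_pi_lambda _ fun j => measurable_eval_comp' hZt ?_
    exact (measurable_of_countable (fun u : Fin (n+1) => u.succAbove j)).comp hU
  have hLm : Measurable L := by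
    have hLe : L = fun ω => fun i => Function.uncurry ℓ (W ω, Zt ω i) := by
      funext ω i; exact hL ω i
    rw [hLe]
    exact measurable_pi_lambda _ fun i => hℓmeas.comp (hWm.prodMk hZt.eval)
  have hLim : ∀ i, Measurable fun ω => L ω i := fun i => hLm.eval
  -- facts about U
  have hUim : ∀ i, MeasurableSet (U ⁻¹' {i}) := fun i => hU (measurableSet_singleton i)
  have hUν : ∀ i, μ (U ⁻¹' {i}) = (↑(n+1) : ℝ≥0∞)⁻¹ := fun i => hUunif i
  have hUne : ∀ i, μ (U ⁻¹' {i}) ≠ 0 := by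
    intro i; rw [hUν i]
    simp
  have hprob : ∀ i, IsProbabilityMeasure (μ[|U ⁻¹' {i}]) := fun i =>
    cond_isProbabilityMeasure (hUne i)
  have haeU : ∀ i, ∀ᵐ ω ∂(μ[|U ⁻¹' {i}]), U ω = i := by
    intro i
    rw [ae_iff]
    have h : {ω | ¬ U ω = i} = (U ⁻¹' {i})ᶜ := rfl
    rw [h, cond_apply (hUim i)]
    simp
  -- interpolation: off-U losses vanish a.s.
  have hae0 : ∀ᵐ ω ∂μ, ∀ j, j ≠ U ω → ℓ (W ω) (Zt ω j) = 0 := by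
    filter_upwards [hinterp] with ω hω j hj
    obtain ⟨k, hk⟩ := Fin.exists_succAbove_eq hj
    have hn : (n : ℝ) ≠ 0 := Nat.cast_ne_zero.2 (Nat.pos_iff_ne_zero.1 k.pos)
    have hsum : ∑ i : Fin n, ℓ (W ω) ((U ω).removeNth (Zt ω) i) = 0 := by
      rcases mul_eq_zero.1 hω with h | h
      · exact absurd h (inv_ne_zero hn)
      · exact h
    have hterm := (Finset.sum_eq_zero_iff_of_nonneg
      (fun i _ => (hℓ01 (W ω) ((U ω).removeNth (Zt ω) i)).1)).1 hsum k (Finset.mem_univ k)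
    rw [← hk]
    simpa [Fin.removeNth] using hterm
  -- product measures
  have hprobξ : IsProbabilityMeasure (μ.map ξ) := Measure.isProbabilityMeasure_map hξ.aemeasurable
  set pin : Measure (Fin n → 𝒳 × 𝒴) := Measure.pi fun _ => D with hpin
  set νξ : Measure R := μ.map ξ with hνξ
  set g : (Fin n → 𝒳 × 𝒴) × R → ℝ := fun p => ∫ a, ℓ (A p.1 p.2) a ∂D with hg
  have hFm : Measurable fun q : ((Fin n → 𝒳 × 𝒴) × R) × (𝒳 × 𝒴) =>
      ℓ (A q.1.1 q.1.2) q.2 :=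
    hℓmeas.comp ((hA.comp measurable_fst).prodMk measurable_snd)
  have hgsm : StronglyMeasurable g :=
    hFm.stronglyMeasurable.integral_prod_right'
  have hg0 : ∀ p, 0 ≤ g p := fun p => integral_nonneg fun a => (hℓ01 _ _).1
  have hg1 : ∀ p, g p ≤ 1 := by
    intro p
    calc g p ≤ ∫ _, (1:ℝ) ∂D := by
          refine integral_mono ?_ (integrable_const 1) (fun a => (hℓ01 _ _).2)
          exact integrable_of_le_one'
            (hℓmeas.comp (measurable_const.prodMk measurable_id)).aestronglyMeasurable
            (fun a => (hℓ01 _ _).1) (fun a => (hℓ01 _ _).2)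
      _ = 1 := by simp
  set c : ℝ := ∫ p, g p ∂(pin.prod νξ) with hc
  -- conditional joint law of (Zt, ξ) given U = i
  have hmap : ∀ i, (μ[|U ⁻¹' {i}]).map (fun ω => (Zt ω, ξ ω))
      = (Measure.pi fun _ : Fin (n+1) => D).prod νξ := by
    intro i
    rw [← hiid, hνξ]
    refine (Measure.prod_eq fun s t hs ht => ?_).symm
    rw [Measure.map_apply (hZt.prodMk hξ) (hs.prod ht)]
    have hpre : (fun ω => (Zt ω, ξ ω)) ⁻¹' (s ×ˢ t) = Zt ⁻¹' s ∩ ξ ⁻¹' t := Set.mk_preimage_prod _ _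
    rw [hpre, cond_apply (hUim i)]
    have h1 : U ⁻¹' {i} ∩ (Zt ⁻¹' s ∩ ξ ⁻¹' t)
        = ξ ⁻¹' t ∩ ((fun ω => (Zt ω, U ω)) ⁻¹' (s ×ˢ {i})) := by
      ext ω
      simp only [Set.mem_inter_iff, Set.mem_preimage, Set.mem_prod, Set.mem_singleton_iff]
      tauto
    rw [h1, hξindep.measure_inter_preimage_eq_mul t (s ×ˢ {i}) ht
      (hs.prod (measurableSet_singleton i))]
    have h2 : (fun ω => (Zt ω, U ω)) ⁻¹' (s ×ˢ {i}) = Zt ⁻¹' s ∩ U ⁻¹' {i} :=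
      Set.mk_preimage_prod _ _
    rw [h2, hUindep.symm.measure_inter_preimage_eq_mul s {i} hs (measurableSet_singleton i),
      Measure.map_apply hZt hs, Measure.map_apply hξ ht]
    rw [show μ (ξ ⁻¹' t) * (μ (Zt ⁻¹' s) * μ (U ⁻¹' {i}))
        = μ (U ⁻¹' {i}) * (μ (Zt ⁻¹' s) * μ (ξ ⁻¹' t)) by ring, ← mul_assoc,
      ENNReal.inv_mul_cancel (hUne i) (measure_ne_top μ _), one_mul]
  -- the conditional expectation of L_i given U = i equals c
  have hS1 : ∀ i, ∫ ω, L ω i ∂(μ[|U ⁻¹' {i}]) = c := by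
    intro i
    haveI := hprob i
    set f : (Fin (n+1) → 𝒳 × 𝒴) × R → ℝ :=
      fun p => ℓ (A (i.removeNth p.1) p.2) (p.1 i) with hf
    have hrmNm : Measurable fun z : Fin (n+1) → 𝒳 × 𝒴 => i.removeNth z :=
      measurable_pi_lambda _ fun j => measurable_pi_apply _
    have hfm : Measurable f := by
      refine hℓmeas.comp (Measurable.prodMk ?_ ((measurable_pi_apply i).comp measurable_fst))
      exact hA.comp ((hrmNm.comp measurable_fst).prodMk measurable_snd)
    have h1 : ∫ ω, L ω i ∂(μ[|U ⁻¹' {i}]) = ∫ ω, f (Zt ω, ξ ω) ∂(μ[|U ⁻¹' {i}]) := by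
      refine integral_congr_ae ?_
      filter_upwards [haeU i] with ω hωi
      rw [hL, hW, hωi]
    have h2 : ∫ ω, f (Zt ω, ξ ω) ∂(μ[|U ⁻¹' {i}])
        = ∫ p, f p ∂((Measure.pi fun _ : Fin (n+1) => D).prod νξ) := by
      rw [← hmap i, integral_map (hZt.prodMk hξ).aemeasurable hfm.aestronglyMeasurable]
    set e := MeasurableEquiv.piFinSuccAbove (fun _ : Fin (n+1) => 𝒳 × 𝒴) i with he
    have hmp1 : MeasurePreserving
        (fun p : (Fin (n+1) → 𝒳 × 𝒴) × R => ((e p.1 : (𝒳 × 𝒴) × (Fin n → 𝒳 × 𝒴)), p.2))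
        ((Measure.pi fun _ : Fin (n+1) => D).prod νξ) ((D.prod pin).prod νξ) :=
      (measurePreserving_piFinSuccAbove (fun _ : Fin (n+1) => D) i).prod (MeasurePreserving.id νξ)
    have hmp2 := measurePreserving_prodAssoc D pin νξ
    set F : (𝒳 × 𝒴) × ((Fin n → 𝒳 × 𝒴) × R) → ℝ := fun q => ℓ (A q.2.1 q.2.2) q.1 with hF
    have hFm2 : Measurable F :=
      hℓmeas.comp ((hA.comp measurable_snd).prodMk measurable_fst)
    have hmp : MeasurePreserving
        (fun p : (Fin (n+1) → 𝒳 × 𝒴) × R => MeasurableEquiv.prodAssoc ((e p.1 : (𝒳 × 𝒴) × (Fin n → 𝒳 × 𝒴)), p.2))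
        ((Measure.pi fun _ : Fin (n+1) => D).prod νξ) (D.prod (pin.prod νξ)) := hmp2.comp hmp1
    have hcomp : f = fun p => F (MeasurableEquiv.prodAssoc ((e p.1 : (𝒳 × 𝒴) × (Fin n → 𝒳 × 𝒴)), p.2)) := by
      funext p
      simp only [hf, hF, he, MeasurableEquiv.prodAssoc, MeasurableEquiv.piFinSuccAbove_apply,
        MeasurableEquiv.coe_mk, Equiv.prodAssoc_apply, Fin.insertNthEquiv_symm_apply]
    have h3 : ∫ p, f p ∂((Measure.pi fun _ : Fin (n+1) => D).prod νξ)
        = ∫ q, F q ∂(D.prod (pin.prod νξ)) := by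
      rw [hcomp, ← hmp.map_eq,
        integral_map hmp.measurable.aemeasurable hFm2.aestronglyMeasurable]
    have hFint : Integrable F (D.prod (pin.prod νξ)) :=
      integrable_of_le_one' hFm2.aestronglyMeasurable (fun q => (hℓ01 _ _).1)
        (fun q => (hℓ01 _ _).2)
    have h4 : ∫ q, F q ∂(D.prod (pin.prod νξ))
        = ∫ a, ∫ p, ℓ (A p.1 p.2) a ∂(pin.prod νξ) ∂D := integral_prod _ hFint
    have h5 : ∫ a, ∫ p, ℓ (A p.1 p.2) a ∂(pin.prod νξ) ∂D
        = ∫ p, ∫ a, ℓ (A p.1 p.2) a ∂D ∂(pin.prod νξ) := integral_integral_swap hFint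
    rw [h1, h2, h3, h4, h5, hc]
  -- the risk equals c
  have hS2 : Rv = c := by
    rw [hRv]
    have hXm : Measurable fun ω => ∫ a, ℓ (W ω) a ∂D := by
      have h : Measurable fun q : Ω × (𝒳 × 𝒴) => ℓ (W q.1) q.2 :=
        hℓmeas.comp ((hWm.comp measurable_fst).prodMk measurable_snd)
      exact h.stronglyMeasurable.integral_prod_right'.measurable
    have hX0 : ∀ ω, 0 ≤ ∫ a, ℓ (W ω) a ∂D := fun ω => integral_nonneg fun a => (hℓ01 _ _).1
    have hX1 : ∀ ω, (∫ a, ℓ (W ω) a ∂D) ≤ 1 := by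
      intro ω
      calc (∫ a, ℓ (W ω) a ∂D) ≤ ∫ _, (1:ℝ) ∂D := by
            refine integral_mono ?_ (integrable_const 1) (fun a => (hℓ01 _ _).2)
            exact integrable_of_le_one'
              (hℓmeas.comp (measurable_const.prodMk measurable_id)).aestronglyMeasurable
              (fun a => (hℓ01 _ _).1) (fun a => (hℓ01 _ _).2)
        _ = 1 := by simp
    have huniv : (Set.univ : Set Ω) = ⋃ i : Fin (n+1), U ⁻¹' {i} := by
      ext ω; simp
    have hdisj : Pairwise (Function.onFun Disjoint fun i : Fin (n+1) => U ⁻¹' {i}) := by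
      intro i j hij
      simp only [Function.onFun, Set.disjoint_left, Set.mem_preimage, Set.mem_singleton_iff]
      rintro ω h1 h2
      exact hij (h1 ▸ h2 ▸ rfl)
    have hTint : ∀ i : Fin (n+1), IntegrableOn (fun ω => ∫ a, ℓ (W ω) a ∂D) (U ⁻¹' {i}) μ :=
      fun i => (integrable_of_le_one' hXm.aestronglyMeasurable hX0 hX1).integrableOn
    rw [← setIntegral_univ, huniv,
      integral_iUnion_fintype (fun i => hUim i) hdisj hTint]
    have hpiece : ∀ i : Fin (n+1), ∫ ω in U ⁻¹' {i}, (∫ a, ℓ (W ω) a ∂D) ∂μ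
        = ((n+1 : ℕ) : ℝ)⁻¹ * c := by
      intro i
      haveI := hprob i
      have hres : μ.restrict (U ⁻¹' {i}) = μ (U ⁻¹' {i}) • (μ[|U ⁻¹' {i}]) := by
        rw [ProbabilityTheory.cond, smul_smul,
          ENNReal.mul_inv_cancel (hUne i) (measure_ne_top _ _), one_smul]
      rw [hres, integral_smul_measure, hUν i]
      have hg' : ∫ ω, (∫ a, ℓ (W ω) a ∂D) ∂(μ[|U ⁻¹' {i}])
          = ∫ ω, g (i.removeNth (Zt ω), ξ ω) ∂(μ[|U ⁻¹' {i}]) := by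
        refine integral_congr_ae ?_
        filter_upwards [haeU i] with ω hωi
        rw [hW, hωi]
      have hrmNm : Measurable fun z : Fin (n+1) → 𝒳 × 𝒴 => i.removeNth z :=
        measurable_pi_lambda _ fun j => measurable_pi_apply _
      have hmapi : ∫ ω, g (i.removeNth (Zt ω), ξ ω) ∂(μ[|U ⁻¹' {i}])
          = ∫ p, g (i.removeNth p.1, p.2) ∂((Measure.pi fun _ : Fin (n+1) => D).prod νξ) := by
        have hgm2 : Measurable fun p : (Fin (n+1) → 𝒳 × 𝒴) × R => g (i.removeNth p.1, p.2) :=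
          hgsm.measurable.comp ((hrmNm.comp measurable_fst).prodMk measurable_snd)
        rw [← hmap i, integral_map (hZt.prodMk hξ).aemeasurable hgm2.aestronglyMeasurable]
      have hmpr : MeasurePreserving (fun z : Fin (n+1) → 𝒳 × 𝒴 => i.removeNth z)
          (Measure.pi fun _ : Fin (n+1) => D) pin := by
        have h1 := measurePreserving_piFinSuccAbove (fun _ : Fin (n+1) => D) i
        have h2 : MeasurePreserving (Prod.snd : (𝒳 × 𝒴) × (Fin n → 𝒳 × 𝒴) → _)
            (D.prod pin) pin := ⟨measurable_snd, by simp⟩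
        exact h2.comp h1
      have hmpri : MeasurePreserving
          (fun p : (Fin (n+1) → 𝒳 × 𝒴) × R => (i.removeNth p.1, p.2))
          ((Measure.pi fun _ : Fin (n+1) => D).prod νξ) (pin.prod νξ) :=
        hmpr.prod (MeasurePreserving.id νξ)
      have hlast : ∫ p, g (i.removeNth p.1, p.2) ∂((Measure.pi fun _ : Fin (n+1) => D).prod νξ)
          = ∫ q, g q ∂(pin.prod νξ) := by
        rw [← hmpri.map_eq, integral_map hmpri.measurable.aemeasurable hgsm.aestronglyMeasurable]
      rw [hg', hmapi, hlast, ← hc, smul_eq_mul, ENNReal.toReal_inv, ENNReal.toReal_natCast]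
    simp_rw [hpiece]
    rw [Finset.sum_const, Finset.card_univ, Fintype.card_fin, nsmul_eq_mul, ← mul_assoc,
      mul_inv_cancel₀ (by positivity), one_mul]
  -- the conditional probability of L_i = 1 equals c
  have hq : ∀ i, ((μ[|U ⁻¹' {i}]) {ω | L ω i = 1}).toReal = c := by
    intro i
    haveI := hprob i
    have hBm : MeasurableSet {ω | L ω i = 1} := (hLim i) (measurableSet_singleton 1)
    have hind : (fun ω => L ω i) = Set.indicator {ω | L ω i = 1} 1 := by
      funext ω
      by_cases h : L ω i = 1
      · simp [Set.indicator, h]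
      · have h0 : L ω i = 0 := by
          rcases hℓbin (W ω) (Zt ω i) with e | e
          · rw [hL]; exact e
          · exact absurd ((hL ω i).trans e) h
        simp [Set.indicator, h, h0]
    have := hS1 i
    rw [hind, integral_indicator_one hBm] at this
    exact this
  -- the conditional law of L
  have hdist : ∀ i, (μ[|U ⁻¹' {i}]).map L
      = (1 - (μ[|U ⁻¹' {i}]) {ω | L ω i = 1}) • Measure.dirac (0 : Fin (n+1) → ℝ)
        + ((μ[|U ⁻¹' {i}]) {ω | L ω i = 1}) • Measure.dirac (Pi.single i (1:ℝ)) := by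
    intro i
    haveI := hprob i
    have hBm : MeasurableSet {ω | L ω i = 1} := (hLim i) (measurableSet_singleton 1)
    set q := (μ[|U ⁻¹' {i}]) {ω | L ω i = 1} with hqdef
    have h0' : ∀ᵐ ω ∂(μ[|U ⁻¹' {i}]), ∀ j, j ≠ U ω → ℓ (W ω) (Zt ω j) = 0 :=
      hae0.filter_mono cond_absolutelyContinuous.ae_le
    have haeL : ∀ᵐ ω ∂(μ[|U ⁻¹' {i}]),
        L ω = if L ω i = 1 then Pi.single i (1:ℝ) else 0 := by
      filter_upwards [h0', haeU i] with ω h1 h2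
      funext j
      rw [apply_ite (fun f : Fin (n+1) → ℝ => f j)]
      by_cases hj : j = i
      · subst hj
        by_cases h : L ω j = 1
        · rw [if_pos h, Pi.single_eq_same, h]
        · have h0 : L ω j = 0 := by
            rcases hℓbin (W ω) (Zt ω j) with e | e
            · rw [hL]; exact e
            · exact absurd ((hL ω j).trans e) h
          rw [if_neg h, h0, Pi.zero_apply]
      · have h0 : L ω j = 0 := by
          rw [hL]
          exact h1 j (by rw [h2]; exact hj)
        rw [h0]
        by_cases h : L ω i = 1
        · rw [if_pos h, Pi.single_eq_of_ne hj]
        · rw [if_neg h, Pi.zero_apply]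
    rw [Measure.map_congr haeL]
    have hfm : Measurable fun ω => if L ω i = 1 then Pi.single i (1:ℝ) else (0 : Fin (n+1) → ℝ) :=
      Measurable.ite hBm measurable_const measurable_const
    ext E hE
    have hpre : (fun ω => if L ω i = 1 then Pi.single i (1:ℝ) else (0 : Fin (n+1) → ℝ)) ⁻¹' E
        = (if Pi.single i (1:ℝ) ∈ E then {ω | L ω i = 1} else ∅)
          ∪ (if (0 : Fin (n+1) → ℝ) ∈ E then {ω | L ω i = 1}ᶜ else ∅) := by
      ext ω
      by_cases h : L ω i = 1 <;>
        by_cases h1 : Pi.single i (1:ℝ) ∈ E <;>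
          by_cases h2 : (0 : Fin (n+1) → ℝ) ∈ E <;>
            simp [h, h1, h2]
    have hq1 : q ≤ 1 := prob_le_one
    have hd0 : (Measure.dirac (0 : Fin (n+1) → ℝ)) E
        = if (0 : Fin (n+1) → ℝ) ∈ E then 1 else 0 := by
      rw [Measure.dirac_apply]; simp [Set.indicator]
    have hds : (Measure.dirac (Pi.single i (1:ℝ))) E
        = if Pi.single i (1:ℝ) ∈ E then 1 else 0 := by
      rw [Measure.dirac_apply]; simp [Set.indicator]
    rw [Measure.map_apply hfm hE, hpre, Measure.add_apply, Measure.smul_apply,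
      Measure.smul_apply, smul_eq_mul, smul_eq_mul, hd0, hds]
    by_cases h1 : Pi.single i (1:ℝ) ∈ E <;> by_cases h2 : (0 : Fin (n+1) → ℝ) ∈ E <;>
      simp only [h1, h2, if_true, if_false, Set.union_empty, Set.empty_union,
        mul_one, mul_zero, add_zero, zero_add]
    · rw [Set.union_compl_self, measure_univ, tsub_add_cancel_of_le hq1]
    · rfl
    · exact prob_compl_eq_one_sub hBm
    · exact measure_empty
  -- assemble
  have hc0 : 0 ≤ c := by rw [← hq 0]; exact ENNReal.toReal_nonneg
  have hc1 : c ≤ 1 := by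
    haveI := hprob 0
    rw [← hq 0]
    calc ((μ[|U ⁻¹' {(0 : Fin (n+1))}]) {ω | L ω 0 = 1}).toReal
        ≤ (1 : ℝ≥0∞).toReal := ENNReal.toReal_mono ENNReal.one_ne_top prob_le_one
      _ = 1 := ENNReal.toReal_one
  have hR0 : 0 ≤ Rv := hS2 ▸ hc0
  have hR1 : Rv ≤ 1 := hS2 ▸ hc1
  have hent : ∀ i, measEntropy ((μ[|U ⁻¹' {i}]).map L)
      = ENNReal.ofReal (Real.negMulLog (1 - Rv)) + ENNReal.ofReal (Real.negMulLog Rv) := by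
    intro i
    haveI := hprob i
    have hq1 : (μ[|U ⁻¹' {i}]) {ω | L ω i = 1} ≤ 1 := prob_le_one
    have hxy : (0 : Fin (n+1) → ℝ) ≠ Pi.single i (1:ℝ) := by
      intro h
      have h' := congrFun h i
      rw [Pi.zero_apply, Pi.single_eq_same] at h'
      exact zero_ne_one h'
    rw [hdist i, measEntropy_two hxy (tsub_add_cancel_of_le hq1),
      ENNReal.toReal_sub_of_le hq1 ENNReal.one_ne_top, ENNReal.toReal_one, hq i, ← hS2]
  have hsum : ∑ i : Fin (n+1), measEntropy ((μ[|U ⁻¹' {i}]).map L)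
      = ((n+1 : ℕ) : ℝ≥0∞)
        * (ENNReal.ofReal (Real.negMulLog (1 - Rv)) + ENNReal.ofReal (Real.negMulLog Rv)) := by
    simp_rw [hent]
    rw [Finset.sum_const, Finset.card_univ, Fintype.card_fin, nsmul_eq_mul]
  rw [hsum, ← mul_assoc,
    ENNReal.inv_mul_cancel (by exact_mod_cast Nat.succ_ne_zero n) (ENNReal.natCast_ne_top _),
    one_mul,
    ← ENNReal.ofReal_add (Real.negMulLog_nonneg (by linarith) (by linarith))
      (Real.negMulLog_nonneg hR0 hR1)]
  congr 1
  simp only [Real.negMulLog]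
  ring
end

section
/- Let X = Y = [−1,1], let the loss be ℓ(ŷ, (x,y)) = 1{ŷ·y < 0}, and let the data distribution D be the law of (X, h*(X)) where X is uniform on [−1,1] and h*(x) = 1{x > 0}. For n ∈ ℕ, consider the deterministic memorizing learning rule A_n defined by A_n(S_n)(x) = y if (x,y) ∈ S_n and A_n(S_n)(x) = x otherwise. Then A_n is interpolating, its expected risk is 0, I(L; U | Z̃) = 0, and I(Ŷ; U | Z̃) = log(n+1). In particular, the gap between I(Ŷ; U | Z̃) and I(L; U | Z̃) can be maximal (equal to log(n+1)). -/
open MeasureTheory ProbabilityTheory Real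
open scoped ENNReal NNReal Classical

/-- The target concept `h*(x) = 1{x > 0}`. -/
noncomputable def hstar (x : ℝ) : ℝ := if 0 < x then 1 else 0

/-- The data distribution: the law of `(X, h*(X))` with `X` uniform on `[-1,1]`. -/
noncomputable def unifD : Measure (ℝ × ℝ) :=
  ((2⁻¹ : ℝ≥0∞) • (MeasureTheory.volume.restrict (Set.Icc (-1:ℝ) 1))).map
    (fun x => (x, hstar x))

/-- The memorizing learning rule: `A(s)(x) = y` if `(x,y) ∈ s`, and `A(s)(x) = x`
otherwise. -/
noncomputable def memA (n : ℕ) (s : Fin n → ℝ × ℝ) (x : ℝ) : ℝ :=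
  if h : (Finset.univ.filter fun i => (s i).1 = x).Nonempty
  then (s ((Finset.univ.filter fun i => (s i).1 = x).min' h)).2
  else x

lemma measurable_hstar : Measurable hstar := by
  unfold hstar
  exact Measurable.ite (measurableSet_lt measurable_const measurable_id)
    measurable_const measurable_const

lemma hstar_nonneg (x : ℝ) : 0 ≤ hstar x := by unfold hstar; split <;> norm_num

lemma mul_hstar_nonneg (x : ℝ) : 0 ≤ x * hstar x := by
  unfold hstar; split
  · simpa using le_of_lt (by assumption)
  · simp

lemma hstar_eq_self_iff {x : ℝ} (h : x = hstar x) : x = 0 ∨ x = 1 := by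
  unfold hstar at h; split at h
  · right; exact h
  · left; exact h

noncomputable def mRef : Measure ℝ := (2⁻¹ : ℝ≥0∞) • (volume.restrict (Set.Icc (-1:ℝ) 1))

lemma unifD_eq : unifD = mRef.map (fun x => (x, hstar x)) := rfl

lemma measurable_graphMap : Measurable (fun x => (x, hstar x)) :=
  measurable_id.prodMk measurable_hstar

instance : IsProbabilityMeasure mRef := by
  constructor
  simp [mRef, Real.volume_Icc]
  rw [show ENNReal.ofReal (1 + 1) = 2 by norm_num]
  exact ENNReal.inv_mul_cancel (by norm_num) (by norm_num)

instance : IsProbabilityMeasure unifD := by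
  rw [unifD_eq]; exact Measure.isProbabilityMeasure_map measurable_graphMap.aemeasurable

lemma unifD_apply {s : Set (ℝ × ℝ)} (hs : MeasurableSet s) :
    unifD s = mRef {x | (x, hstar x) ∈ s} := by
  rw [unifD_eq, Measure.map_apply measurable_graphMap hs]; rfl

lemma mRef_noAtoms (c : ℝ) : mRef {c} = 0 := by
  simp [mRef]

lemma unifD_labels : unifD {p : ℝ × ℝ | p.2 = hstar p.1} = 1 := by
  rw [unifD_apply]
  · rw [show {x : ℝ | (x, hstar x) ∈ {p : ℝ × ℝ | p.2 = hstar p.1}} = Set.univ by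
      ext x; simp]
    simp
  · exact measurableSet_eq_fun measurable_snd (measurable_hstar.comp measurable_fst)

lemma unifD_fst_eq (c : ℝ) : unifD {p : ℝ × ℝ | p.1 = c} = 0 := by
  rw [unifD_apply]
  · rw [show {x : ℝ | (x, hstar x) ∈ {p : ℝ × ℝ | p.1 = c}} = {c} by ext x; simp [eq_comm]]
    exact mRef_noAtoms c
  · exact measurableSet_eq_fun measurable_fst measurable_const


/-- the idealized prediction vector -/
noncomputable def fpred (n : ℕ) (z : Fin (n+1) → ℝ × ℝ) (u : Fin (n+1)) : Fin (n+1) → ℝ :=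
  fun i => if i = u then (z i).1 else hstar ((z i).1)

lemma measurable_fpred (n : ℕ) (u : Fin (n+1)) : Measurable (fun z => fpred n z u) := by
  apply measurable_pi_lambda
  intro i
  unfold fpred
  by_cases h : i = u
  · simp only [h, if_pos rfl]
    exact (measurable_pi_apply u).fst
  · simp only [if_neg h]
    exact measurable_hstar.comp (measurable_pi_apply i).fst

/-- the good event -/
def Good (n : ℕ) : Set (Fin (n+1) → ℝ × ℝ) :=
  {z | (∀ i, (z i).2 = hstar ((z i).1)) ∧ (∀ i, (z i).1 ≠ 0 ∧ (z i).1 ≠ 1) ∧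
    Function.Injective (fun i => (z i).1)}

lemma memA_ne {n : ℕ} {z : Fin (n+1) → ℝ × ℝ} (hlab : ∀ i, (z i).2 = hstar ((z i).1))
    {i u : Fin (n+1)} (h : i ≠ u) :
    memA n (u.removeNth z) ((z i).1) = hstar ((z i).1) := by
  obtain ⟨j0, hj0⟩ := Fin.exists_succAbove_eq h
  unfold memA
  have hne : (Finset.univ.filter fun j => ((u.removeNth z) j).1 = (z i).1).Nonempty := by
    refine ⟨j0, ?_⟩
    simp only [Finset.mem_filter, Finset.mem_univ, true_and]
    simp [Fin.removeNth, hj0]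
  rw [dif_pos hne]
  have hmem := Finset.min'_mem _ hne
  rw [Finset.mem_filter] at hmem
  rw [show ((u.removeNth z) _).2 = hstar (((u.removeNth z) ((Finset.univ.filter
      fun j => ((u.removeNth z) j).1 = (z i).1).min' hne)).1) from hlab _, hmem.2]

lemma memA_eq_fpred {n : ℕ} {z : Fin (n+1) → ℝ × ℝ} (hz : z ∈ Good n) (u i : Fin (n+1)) :
    memA n (u.removeNth z) ((z i).1) = fpred n z u i := by
  obtain ⟨hlab, hx, hinj⟩ := hz
  by_cases h : i = u
  · unfold memA fpred
    rw [if_pos h, dif_neg]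
    rintro ⟨j, hj⟩
    rw [Finset.mem_filter] at hj
    have h2 : u.succAbove j = i := hinj hj.2
    exact Fin.succAbove_ne u j (h2.trans h)
  · rw [memA_ne hlab h]
    unfold fpred
    rw [if_neg h]

lemma fpred_injective {n : ℕ} {z : Fin (n+1) → ℝ × ℝ} (hz : z ∈ Good n) :
    Function.Injective (fun u => fpred n z u) := by
  obtain ⟨hlab, hx, hinj⟩ := hz
  intro u v huv
  by_contra hne
  have h1 : fpred n z u u = (z u).1 := by unfold fpred; rw [if_pos rfl]
  have h2 : fpred n z v u = hstar ((z u).1) := by unfold fpred; rw [if_neg hne]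
  have : (z u).1 = hstar ((z u).1) :=
    h1.symm.trans ((congrFun huv u).trans h2)
  rcases (by
    unfold hstar at this; split at this
    · right; exact this
    · left; exact this : (z u).1 = 0 ∨ (z u).1 = 1) with h | h
  · exact (hx u).1 h
  · exact (hx u).2 h


noncomputable def piD (n : ℕ) : Measure (Fin (n+1) → ℝ × ℝ) := Measure.pi (fun _ => unifD)

section GoodAE
variable {n : ℕ}


lemma measurableSet_good : MeasurableSet (Good n) := by
  have hA : MeasurableSet {z : Fin (n+1) → ℝ × ℝ | ∀ i, (z i).2 = hstar ((z i).1)} := by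
    rw [Set.setOf_forall]
    exact MeasurableSet.iInter fun i => measurableSet_eq_fun
      (measurable_snd.comp (measurable_pi_apply i))
      (measurable_hstar.comp (measurable_fst.comp (measurable_pi_apply i)))
  have hB : MeasurableSet {z : Fin (n+1) → ℝ × ℝ | ∀ i, (z i).1 ≠ 0 ∧ (z i).1 ≠ 1} := by
    rw [Set.setOf_forall]
    refine MeasurableSet.iInter fun i => MeasurableSet.inter ?_ ?_
    · exact (measurableSet_eq_fun (measurable_fst.comp (measurable_pi_apply i))
        measurable_const).compl
    · exact (measurableSet_eq_fun (measurable_fst.comp (measurable_pi_apply i))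
        measurable_const).compl
  have hC : MeasurableSet {z : Fin (n+1) → ℝ × ℝ | Function.Injective fun i => (z i).1} := by
    have : {z : Fin (n+1) → ℝ × ℝ | Function.Injective fun i => (z i).1} =
        ⋂ (i) (j) (_ : i ≠ j), {z | (z i).1 ≠ (z j).1} := by
      ext z
      simp only [Set.mem_setOf_eq, Set.mem_iInter, Function.Injective]
      constructor
      · intro h i j hij; exact fun he => hij (h he)
      · intro h i j he; by_contra hij; exact h i j hij he
    rw [this]
    refine MeasurableSet.iInter fun i => MeasurableSet.iInter fun j =>
      MeasurableSet.iInter fun _ => (measurableSet_eq_fun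
        (measurable_fst.comp (measurable_pi_apply i))
        (measurable_fst.comp (measurable_pi_apply j))).compl
  exact (hA.inter (hB.inter hC) : _)

lemma pi_map_pair {i j : Fin (n+1)} (hij : i ≠ j) :
    (piD n).map (fun z => (z i, z j)) = unifD.prod unifD := by
  refine (Measure.prod_eq ?_).symm
  intro s t hs ht
  rw [Measure.map_apply ((measurable_pi_apply i).prodMk (measurable_pi_apply j)) (hs.prod ht)]
  have hpre : (fun z : Fin (n+1) → ℝ × ℝ => (z i, z j)) ⁻¹' (s ×ˢ t) =
      Set.pi Set.univ (Function.update (Function.update (fun _ => Set.univ) i s) j t) := by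
    ext z
    simp only [Set.mem_preimage, Set.mem_prod, Set.mem_pi, Set.mem_univ, forall_true_left]
    constructor
    · rintro ⟨h1, h2⟩ k
      rcases eq_or_ne k j with rfl | hkj
      · rw [Function.update_self]; exact h2
      rcases eq_or_ne k i with rfl | hki
      · rw [Function.update_of_ne hkj, Function.update_self]; exact h1
      · rw [Function.update_of_ne hkj, Function.update_of_ne hki]; trivial
    · intro h
      constructor
      · have := h i
        rwa [Function.update_of_ne hij, Function.update_self] at this
      · have := h j
        rwa [Function.update_self] at this
  rw [hpre]
  simp only [piD]
  rw [Measure.pi_pi]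
  have : (fun k => unifD (Function.update (Function.update (fun _ => Set.univ) i s) j t k)) =
      Function.update (Function.update (fun _ => (1:ℝ≥0∞)) i (unifD s)) j (unifD t) := by
    funext k
    rcases eq_or_ne k j with rfl | hkj
    · simp
    rcases eq_or_ne k i with rfl | hki
    · simp [Function.update_of_ne hkj, Function.update_of_ne hij.symm]
    · simp [Function.update_of_ne hkj, Function.update_of_ne hki]
  rw [this, Finset.prod_update_of_mem (Finset.mem_univ j)]
  rw [Finset.prod_update_of_mem (by simp [hij] : i ∈ Finset.univ \ {j})]
  simp [mul_comm]

lemma good_ae : ∀ᵐ z ∂(piD n), z ∈ Good n := by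
  have h1 : ∀ i : Fin (n+1), ∀ᵐ z ∂(piD n), (z i).2 = hstar ((z i).1) := by
    intro i
    have : (piD n) (Function.eval i ⁻¹' {p : ℝ × ℝ | p.2 = hstar p.1}ᶜ) = 0 := by
      apply Measure.pi_eval_preimage_null
      have hms : MeasurableSet {p : ℝ × ℝ | p.2 = hstar p.1} :=
        measurableSet_eq_fun measurable_snd (measurable_hstar.comp measurable_fst)
      rw [measure_compl hms (measure_ne_top _ _), measure_univ, unifD_labels, tsub_self]
    rw [ae_iff]
    convert this using 2
    rfl
  have h2 : ∀ i : Fin (n+1), ∀ᵐ z ∂(piD n), (z i).1 ≠ 0 ∧ (z i).1 ≠ 1 := by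
    intro i
    have h0 : (piD n) (Function.eval i ⁻¹' ({p : ℝ × ℝ | p.1 = 0} ∪ {p | p.1 = 1})) = 0 := by
      apply Measure.pi_eval_preimage_null
      apply le_antisymm _ (zero_le)
      calc unifD ({p : ℝ × ℝ | p.1 = 0} ∪ {p | p.1 = 1})
          ≤ unifD {p : ℝ × ℝ | p.1 = 0} + unifD {p | p.1 = 1} := measure_union_le _ _
        _ = 0 := by rw [unifD_fst_eq, unifD_fst_eq]; simp
    rw [ae_iff]
    apply le_antisymm _ (zero_le)
    rw [← h0]
    apply measure_mono
    intro z hz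
    simp only [Set.mem_setOf_eq, not_and_or, not_not] at hz
    rcases hz with h | h <;> simp [Function.eval, Set.mem_preimage, h]
  have h3 : ∀ i j : Fin (n+1), i ≠ j → ∀ᵐ z ∂(piD n), (z i).1 ≠ (z j).1 := by
    intro i j hij
    rw [ae_iff]
    have hmeas : MeasurableSet {p : (ℝ × ℝ) × ℝ × ℝ | p.2.1 = p.1.1} :=
      measurableSet_eq_fun (measurable_fst.comp measurable_snd)
        (measurable_fst.comp measurable_fst)
    have : (piD n) {z | (z i).1 = (z j).1} =
        (unifD.prod unifD) {p | p.2.1 = p.1.1} := by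
      rw [← pi_map_pair hij,
        Measure.map_apply ((measurable_pi_apply i).prodMk (measurable_pi_apply j)) hmeas]
      congr 1
      ext z; simp [eq_comm]
    simp only [not_not]
    rw [this, Measure.prod_apply hmeas]
    have h0 : ∀ x : ℝ × ℝ, unifD {a : ℝ × ℝ | a.1 = x.1} = 0 := fun x => unifD_fst_eq x.1
    simp only [Set.preimage_setOf_eq]
    simp [h0]
  have hall1 : ∀ᵐ z ∂(piD n), ∀ i, (z i).2 = hstar ((z i).1) := ae_all_iff.2 h1
  have hall2 : ∀ᵐ z ∂(piD n), ∀ i, (z i).1 ≠ 0 ∧ (z i).1 ≠ 1 := ae_all_iff.2 h2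
  have hall3 : ∀ᵐ z ∂(piD n), ∀ i j, i ≠ j → (z i).1 ≠ (z j).1 :=
    ae_all_iff.2 fun i => ae_all_iff.2 fun j => by
      rcases eq_or_ne i j with rfl | hij
      · exact Filter.Eventually.of_forall (fun z h => absurd rfl h)
      · filter_upwards [h3 i j hij] with z hz _; exact hz
  · filter_upwards [hall1, hall2, hall3] with z hz1 hz2 hz3
    refine ⟨hz1, hz2, ?_⟩
    intro a b hab
    by_contra hne
    exact hz3 a b hne hab
end GoodAE


section MixKernel

variable {α β : Type*} [MeasurableSpace α] [MeasurableSpace β]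

/-- A finite mixture of deterministic kernels. -/
noncomputable def mixKernel {m : ℕ} (ψ : Fin m → α → β) (hψ : ∀ u, Measurable (ψ u))
    (c : ℝ≥0∞) : Kernel α β where
  toFun := fun a => c • ∑ u, Measure.dirac (ψ u a)
  measurable' := by
    rw [Measure.measurable_measure]
    intro s hs
    simp only [Measure.smul_apply, Measure.finset_sum_apply, smul_eq_mul]
    apply Measurable.const_mul
    apply Finset.measurable_sum
    intro u _
    simp only [Measure.dirac_apply' _ hs]
    exact ((measurable_one.indicator hs)).comp (hψ u)

lemma mixKernel_apply {m : ℕ} (ψ : Fin m → α → β) (hψ : ∀ u, Measurable (ψ u))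
    (c : ℝ≥0∞) (a : α) : mixKernel ψ hψ c a = c • ∑ u, Measure.dirac (ψ u a) := rfl

lemma mixKernel_isMarkov {m : ℕ} (ψ : Fin (m+1) → α → β) (hψ : ∀ u, Measurable (ψ u)) :
    IsMarkovKernel (mixKernel ψ hψ (((m+1 : ℕ) : ℝ≥0∞))⁻¹) := by
  constructor
  intro a
  constructor
  rw [mixKernel_apply]
  simp only [Measure.smul_apply, Measure.finset_sum_apply, smul_eq_mul]
  simp [Finset.card_univ]
  exact ENNReal.inv_mul_cancel (by exact_mod_cast Nat.succ_ne_zero m) (by simp)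

end MixKernel

section Joint

variable {Ω : Type*} [MeasurableSpace Ω] {μ : Measure Ω} [IsProbabilityMeasure μ]
  {n : ℕ} {β : Type*} [MeasurableSpace β]
  {Zt : Ω → Fin (n+1) → ℝ × ℝ} {U : Ω → Fin (n+1)}

lemma map_joint_eq_compProd (hZt : Measurable Zt) (hU : Measurable U)
    (hUunif : ∀ i, μ {ω | U ω = i} = (↑(n+1) : ℝ≥0∞)⁻¹)
    (hUindep : IndepFun U Zt μ)
    (ψ : Fin (n+1) → (Fin (n+1) → ℝ × ℝ) → β) (hψ : ∀ u, Measurable (ψ u)) :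
    μ.map (fun ω => (Zt ω, ψ (U ω) (Zt ω))) =
      (μ.map Zt) ⊗ₘ mixKernel ψ hψ (((n+1 : ℕ) : ℝ≥0∞))⁻¹ := by
  haveI : IsMarkovKernel (mixKernel ψ hψ (((n+1 : ℕ) : ℝ≥0∞))⁻¹) := mixKernel_isMarkov ψ hψ
  have hΦ : Measurable (fun p : (Fin (n+1) → ℝ × ℝ) × Fin (n+1) => (p.1, ψ p.2 p.1)) := by
    apply measurable_from_prod_countable_left
    intro u
    exact measurable_id.prodMk (hψ u)
  have hpair : μ.map (fun ω => (Zt ω, U ω)) = (μ.map Zt).prod (μ.map U) :=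
    (indepFun_iff_map_prod_eq_prod_map_map hZt.aemeasurable hU.aemeasurable).mp hUindep.symm
  have hcomp : μ.map (fun ω => (Zt ω, ψ (U ω) (Zt ω))) =
      ((μ.map Zt).prod (μ.map U)).map (fun p => (p.1, ψ p.2 p.1)) := by
    rw [← hpair, Measure.map_map hΦ (hZt.prodMk hU)]
    rfl
  rw [hcomp]
  ext s hs
  have hslice : ∀ u : Fin (n+1), MeasurableSet {z : Fin (n+1) → ℝ × ℝ | (z, ψ u z) ∈ s} :=
    fun u => (measurable_id.prodMk (hψ u)) hs
  have hUu : ∀ u, (μ.map U) {u} = (((n+1:ℕ)) : ℝ≥0∞)⁻¹ := by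
    intro u
    rw [Measure.map_apply hU (measurableSet_singleton u)]
    exact hUunif u
  -- LHS
  rw [Measure.map_apply hΦ hs, Measure.prod_apply (hΦ hs)]
  have hpt : ∀ z : Fin (n+1) → ℝ × ℝ,
      (μ.map U) (Prod.mk z ⁻¹' ((fun p : (Fin (n+1) → ℝ × ℝ) × Fin (n+1) =>
        (p.1, ψ p.2 p.1)) ⁻¹' s))
      = ∑ u, Set.indicator {z' | (z', ψ u z') ∈ s} (fun _ => (((n+1:ℕ)) : ℝ≥0∞)⁻¹) z := by
    intro z
    rw [← Measure.tsum_indicator_apply_singleton _ _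
      (measurable_prodMk_left (hΦ hs))]
    rw [tsum_fintype]
    apply Finset.sum_congr rfl
    intro u _
    simp only [Set.indicator_apply, Set.mem_preimage, Set.mem_setOf_eq, hUu u]
  rw [lintegral_congr hpt]
  rw [lintegral_finset_sum _ (fun u _ =>
    (measurable_const.indicator (hslice u) : Measurable _))]
  -- RHS
  rw [Measure.compProd_apply hs]
  have hker : ∀ z, (mixKernel ψ hψ (((n+1 : ℕ) : ℝ≥0∞))⁻¹) z (Prod.mk z ⁻¹' s)
      = ∑ u, Set.indicator {z' | (z', ψ u z') ∈ s} (fun _ => (((n+1:ℕ)) : ℝ≥0∞)⁻¹) z := by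
    intro z
    rw [mixKernel_apply]
    simp only [Measure.smul_apply, Measure.finset_sum_apply, smul_eq_mul, Finset.mul_sum]
    apply Finset.sum_congr rfl
    intro u _
    rw [Measure.dirac_apply' _ (measurable_prodMk_left hs)]
    simp only [Set.indicator_apply, Set.mem_preimage, Set.mem_setOf_eq]
    split <;> simp
  rw [lintegral_congr hker]
  rw [lintegral_finset_sum _ (fun u _ =>
    (measurable_const.indicator (hslice u) : Measurable _))]

end Joint

section CondDistribEq

variable {Ω : Type*} [MeasurableSpace Ω] {μ : Measure Ω} [IsProbabilityMeasure μ]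
  {n : ℕ} {β : Type*} [MeasurableSpace β] [StandardBorelSpace β] [Nonempty β]
  {Zt : Ω → Fin (n+1) → ℝ × ℝ} {U : Ω → Fin (n+1)}

lemma condDistrib_eq_mixKernel (hZt : Measurable Zt) (hU : Measurable U)
    (hUunif : ∀ i, μ {ω | U ω = i} = (↑(n+1) : ℝ≥0∞)⁻¹)
    (hUindep : IndepFun U Zt μ)
    (ψ : Fin (n+1) → (Fin (n+1) → ℝ × ℝ) → β) (hψ : ∀ u, Measurable (ψ u))
    (W : Ω → β) (hWmeas : Measurable W)
    (hW : ∀ᵐ ω ∂μ, W ω = ψ (U ω) (Zt ω)) :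
    ∀ᵐ z ∂(μ.map Zt), condDistrib W Zt μ z = mixKernel ψ hψ (((n+1 : ℕ) : ℝ≥0∞))⁻¹ z := by
  haveI : IsMarkovKernel (mixKernel ψ hψ (((n+1 : ℕ) : ℝ≥0∞))⁻¹) := mixKernel_isMarkov ψ hψ
  set κ := mixKernel ψ hψ (((n+1 : ℕ) : ℝ≥0∞))⁻¹ with hκdef
  set ρ := μ.map (fun ω => (Zt ω, W ω)) with hρdef
  haveI : IsProbabilityMeasure ρ :=
    Measure.isProbabilityMeasure_map (hZt.prodMk hWmeas).aemeasurable
  have hρ : ρ = (μ.map Zt) ⊗ₘ κ := by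
    rw [hρdef, Measure.map_congr (f := fun ω => (Zt ω, W ω))
      (g := fun ω => (Zt ω, ψ (U ω) (Zt ω))) (hW.mono fun ω h => by simp only [h])]
    exact map_joint_eq_compProd hZt hU hUunif hUindep ψ hψ
  have hfst : ρ.fst = μ.map Zt := by
    rw [hρ, Measure.fst_compProd]
  have huniq := eq_condKernel_of_measure_eq_compProd κ (by rw [hfst, ← hρ] : ρ = ρ.fst ⊗ₘ κ)
  rw [hfst] at huniq
  have hcd : condDistrib W Zt μ = ρ.condKernel := by rw [condDistrib]
  filter_upwards [huniq] with z hz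
  rw [hcd, ← hz]

end CondDistribEq


lemma klDiv'_self {γ : Type*} [MeasurableSpace γ] (ν : Measure γ) [SigmaFinite ν] :
    klDiv' ν ν = 0 := by
  have hae : (fun x => Real.log ((ν.rnDeriv ν x).toReal)) =ᵐ[ν] fun _ => 0 := by
    filter_upwards [Measure.rnDeriv_self ν] with x hx
    rw [hx]; simp
  unfold klDiv'
  rw [if_pos ⟨Measure.AbsolutelyContinuous.rfl, (integrable_congr hae).mpr
    (integrable_zero _ _ _)⟩]
  rw [integral_congr_ae hae]
  simp

lemma isProbability_mixDirac {δ : Type*} [MeasurableSpace δ] {n : ℕ} (f : Fin (n+1) → δ) :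
    IsProbabilityMeasure ((((n+1:ℕ) : ℝ≥0∞))⁻¹ • ∑ u, Measure.dirac (f u)) := by
  constructor
  simp only [Measure.smul_apply, Measure.finset_sum_apply, smul_eq_mul]
  simp only [measure_univ, Finset.sum_const, Finset.card_univ, Fintype.card_fin, nsmul_eq_mul,
    mul_one]
  exact ENNReal.inv_mul_cancel (by exact_mod_cast Nat.succ_ne_zero n) (by simp)

lemma klDiv_graph {γ : Type*} [MeasurableSpace γ] [MeasurableSingletonClass γ]
    (n : ℕ) (v : Fin (n+1) → γ) (hv : Function.Injective v) :
    klDiv' ((((n+1:ℕ) : ℝ≥0∞))⁻¹ • ∑ u, Measure.dirac (v u, u))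
      ((((((n+1:ℕ) : ℝ≥0∞))⁻¹ • ∑ u, Measure.dirac (v u)).prod
        ((((n+1:ℕ) : ℝ≥0∞))⁻¹ • ∑ u : Fin (n+1), Measure.dirac u)))
      = ENNReal.ofReal (Real.log (n+1)) := by
  set c : ℝ≥0∞ := (((n+1:ℕ) : ℝ≥0∞))⁻¹ with hcdef
  have hc0 : ((n+1:ℕ) : ℝ≥0∞) ≠ 0 := by exact_mod_cast Nat.succ_ne_zero n
  have hctop : ((n+1:ℕ) : ℝ≥0∞) ≠ ⊤ := by simp
  set P : Measure (γ × Fin (n+1)) := c • ∑ u, Measure.dirac (v u, u) with hPdef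
  haveI hPprob : IsProbabilityMeasure P := isProbability_mixDirac (fun u => (v u, u))
  haveI : IsProbabilityMeasure (c • ∑ u, Measure.dirac (v u)) := isProbability_mixDirac v
  haveI : IsProbabilityMeasure (c • ∑ u : Fin (n+1), Measure.dirac u) :=
    isProbability_mixDirac (fun u : Fin (n+1) => u)
  set Q : Measure (γ × Fin (n+1)) :=
    (c • ∑ u, Measure.dirac (v u)).prod (c • ∑ u : Fin (n+1), Measure.dirac u) with hQdef
  haveI : IsProbabilityMeasure Q := by rw [hQdef]; infer_instance
  have hGmeas : MeasurableSet {p : γ × Fin (n+1) | p.1 = v p.2} := by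
    have : {p : γ × Fin (n+1) | p.1 = v p.2} = ⋃ u, {(v u, u)} := by
      ext ⟨x, u⟩
      simp only [Set.mem_setOf_eq, Set.mem_iUnion, Set.mem_singleton_iff, Prod.mk.injEq]
      constructor
      · intro h; exact ⟨u, h, rfl⟩
      · rintro ⟨u', h1, rfl⟩; exact h1
    rw [this]
    exact MeasurableSet.iUnion fun u => measurableSet_singleton _
  set h : γ × Fin (n+1) → ℝ≥0∞ :=
    fun p => if p.1 = v p.2 then ((n+1:ℕ) : ℝ≥0∞) else 0 with hhdef
  have hhmeas : Measurable h := by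
    apply Measurable.ite hGmeas <;> exact measurable_const
  have hPapp : ∀ s : Set (γ × Fin (n+1)), MeasurableSet s →
      P s = c * ∑ u, (if (v u, u) ∈ s then 1 else 0) := by
    intro s hs
    rw [hPdef]
    simp only [Measure.smul_apply, Measure.finset_sum_apply, smul_eq_mul]
    congr 1
    apply Finset.sum_congr rfl
    intro u _
    rw [Measure.dirac_apply' _ hs]
    simp [Set.indicator_apply]
  have hPQ : P = Q.withDensity h := by
    ext s hs
    rw [withDensity_apply _ hs, ← lintegral_indicator hs]
    rw [hQdef, lintegral_prod _ ((hhmeas.indicator hs).aemeasurable)]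
    rw [lintegral_smul_measure, lintegral_finset_sum_measure]
    have hinner : ∀ u : Fin (n+1),
        (∫⁻ x, ∫⁻ y, s.indicator h (x, y) ∂(c • ∑ u' : Fin (n+1), Measure.dirac u')
          ∂(Measure.dirac (v u)))
        = c * (if (v u, u) ∈ s then ((n+1:ℕ) : ℝ≥0∞) else 0) := by
      intro u
      rw [lintegral_dirac]
      rw [lintegral_smul_measure, lintegral_finset_sum_measure]
      congr 1
      have hterm : ∀ u' : Fin (n+1), ∫⁻ y, s.indicator h (v u, y) ∂(Measure.dirac u')
          = if u' = u then (if (v u, u) ∈ s then ((n+1:ℕ) : ℝ≥0∞) else 0) else 0 := by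
        intro u'
        rw [lintegral_dirac]
        rcases eq_or_ne u' u with rfl | hne
        · simp [Set.indicator_apply, hhdef]
        · have hvne : ¬ (v u = v u') := fun he => hne (hv he).symm
          rw [if_neg hne]
          simp [Set.indicator_apply, hhdef, hvne]
      rw [Finset.sum_congr rfl fun u' _ => hterm u']
      rw [Finset.sum_ite_eq' Finset.univ u]
      simp
    rw [Finset.sum_congr rfl fun u _ => hinner u, hPapp s hs]
    congr 1
    apply Finset.sum_congr rfl
    intro u _
    rcases em ((v u, u) ∈ s) with hm | hm
    · rw [if_pos hm, if_pos hm, hcdef, ENNReal.inv_mul_cancel hc0 hctop]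
    · rw [if_neg hm, if_neg hm, mul_zero]
  have hac : P ≪ Q := by
    rw [hPQ]; exact withDensity_absolutelyContinuous Q h
  have hrn : P.rnDeriv Q =ᵐ[Q] h := by
    rw [hPQ]; exact Measure.rnDeriv_withDensity Q hhmeas
  have hrnP : P.rnDeriv Q =ᵐ[P] h := hac.ae_le hrn
  have hPgraph : ∀ᵐ p ∂P, p.1 = v p.2 := by
    rw [ae_iff]
    have h9 := hPapp _ hGmeas.compl
    rw [Set.compl_setOf] at h9
    rw [h9]
    simp
  have hae : (fun p => Real.log ((P.rnDeriv Q p).toReal)) =ᵐ[P]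
      (fun _ => Real.log ((n:ℝ)+1)) := by
    filter_upwards [hrnP, hPgraph] with p h1 h2
    rw [h1, hhdef]
    simp only [if_pos h2]
    rw [ENNReal.toReal_natCast]
    norm_num
  unfold klDiv'
  rw [if_pos ⟨hac, (integrable_congr hae).mpr (integrable_const _)⟩]
  rw [integral_congr_ae hae, integral_const]
  simp


lemma risk_zero (n : ℕ) (s : Fin n → ℝ × ℝ) :
    ∫ z : ℝ × ℝ, (if memA n s z.1 * z.2 < 0 then (1:ℝ) else 0) ∂unifD = 0 := by
  set F : Finset ℝ := Finset.image (fun j => (s j).1) Finset.univ with hF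
  have hnullF : unifD {z : ℝ × ℝ | z.1 ∈ (F : Set ℝ)} = 0 := by
    have : {z : ℝ × ℝ | z.1 ∈ (F : Set ℝ)} = ⋃ c ∈ (F : Set ℝ), {z : ℝ × ℝ | z.1 = c} := by
      ext z; simp
    rw [this]
    rw [measure_biUnion_null_iff (F.countable_toSet)]
    intro c _
    exact unifD_fst_eq c
  have hmemA : ∀ x : ℝ, x ∉ (F : Set ℝ) → memA n s x = x := by
    intro x hx
    unfold memA
    rw [dif_neg]
    rintro ⟨j, hj⟩
    rw [Finset.mem_filter] at hj
    exact hx (by simp [hF]; exact ⟨j, hj.2⟩)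
  have hae : (fun z : ℝ × ℝ => if memA n s z.1 * z.2 < 0 then (1:ℝ) else 0)
      =ᵐ[unifD] (fun z => if z.1 * z.2 < 0 then (1:ℝ) else 0) := by
    rw [Filter.eventuallyEq_iff_exists_mem]
    refine ⟨{z : ℝ × ℝ | z.1 ∈ (F : Set ℝ)}ᶜ, ?_, ?_⟩
    · rw [mem_ae_iff]
      simpa using hnullF
    · intro z hz
      simp only [Set.mem_compl_iff, Set.mem_setOf_eq] at hz
      simp only [hmemA z.1 hz]
  rw [integral_congr_ae hae]
  have hmeas2 : Measurable (fun z : ℝ × ℝ => if z.1 * z.2 < 0 then (1:ℝ) else 0) := by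
    apply Measurable.ite _ measurable_const measurable_const
    exact measurableSet_lt (measurable_fst.mul measurable_snd) measurable_const
  rw [unifD_eq, integral_map measurable_graphMap.aemeasurable
    hmeas2.aestronglyMeasurable]
  have : (fun x : ℝ => if (x, hstar x).1 * (x, hstar x).2 < 0 then (1:ℝ) else 0)
      = fun _ => 0 := by
    funext x
    exact if_neg (not_lt.2 (mul_hstar_nonneg x))
  rw [this, integral_zero]

lemma mixDirac_prod_const {γ : Type*} [MeasurableSpace γ] [MeasurableSingletonClass γ]
    (n : ℕ) (y0 : γ) :
    (((((n+1:ℕ) : ℝ≥0∞))⁻¹ • ∑ _u : Fin (n+1), Measure.dirac y0).prod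
      ((((n+1:ℕ) : ℝ≥0∞))⁻¹ • ∑ u : Fin (n+1), Measure.dirac u))
    = (((n+1:ℕ) : ℝ≥0∞))⁻¹ • ∑ u : Fin (n+1), Measure.dirac (y0, u) := by
  have hc0 : ((n+1:ℕ) : ℝ≥0∞) ≠ 0 := by exact_mod_cast Nat.succ_ne_zero n
  have hctop : ((n+1:ℕ) : ℝ≥0∞) ≠ ⊤ := by simp
  have hfst : ((((n+1:ℕ) : ℝ≥0∞))⁻¹ • ∑ _u : Fin (n+1), Measure.dirac y0)
      = Measure.dirac y0 := by
    rw [Finset.sum_const, Finset.card_univ, Fintype.card_fin]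
    rw [← Nat.cast_smul_eq_nsmul ℝ≥0∞, smul_smul, ENNReal.inv_mul_cancel hc0 hctop, one_smul]
  rw [hfst, Measure.dirac_prod]
  ext t ht
  rw [Measure.map_apply measurable_prodMk_left ht]
  simp only [Measure.smul_apply, Measure.finset_sum_apply, smul_eq_mul]
  congr 1
  apply Finset.sum_congr rfl
  intro u _
  rw [Measure.dirac_apply, Measure.dirac_apply]
  rfl


/-- With the loss `ℓ(ŷ,(x,y)) = 1{ŷ·y < 0}` and data `(X, h*(X))`, `X` uniform on `[-1,1]`,
the memorizing rule is interpolating, has zero risk, `I(L;U∣Z̃) = 0`, and yet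
`I(Ŷ;U∣Z̃) = log (n+1)`: the gap between the two conditional mutual informations is
maximal. -/
theorem memorizer_gap_example
    {Ω : Type*} [MeasurableSpace Ω] (μ : Measure Ω) [IsProbabilityMeasure μ]
    (n : ℕ)
    -- the supersample and the held-out index
    (Zt : Ω → Fin (n+1) → ℝ × ℝ) (hZt : Measurable Zt)
    (U : Ω → Fin (n+1)) (hU : Measurable U)
    (hiid : μ.map Zt = Measure.pi fun _ : Fin (n+1) => unifD)
    (hUunif : ∀ i, μ {ω | U ω = i} = (↑(n+1) : ℝ≥0∞)⁻¹)
    (hUindep : IndepFun U Zt μ)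
    -- the predicted labels of the memorizing rule on the supersample
    (Yh : Ω → Fin (n+1) → ℝ) (hYhmeas : Measurable Yh)
    (hYh : ∀ ω i, Yh ω i = memA n ((U ω).removeNth (Zt ω)) (Zt ω i).1)
    -- the loss vector on the supersample
    (L : Ω → Fin (n+1) → ℝ) (hLmeas : Measurable L)
    (hL : ∀ ω i, L ω i = if Yh ω i * (Zt ω i).2 < 0 then (1:ℝ) else 0) :
    -- the memorizing rule is interpolating
    (∀ᵐ ω ∂μ, ∀ i, i ≠ U ω → L ω i = 0)
    -- its expected risk is `0`
    ∧ ∫ ω, ∫ z, (if memA n ((U ω).removeNth (Zt ω)) z.1 * z.2 < 0 then (1:ℝ) else 0)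
          ∂unifD ∂μ = 0
    -- `I(L;U∣Z̃) = 0`
    ∧ condMutInfo μ L U Zt = 0
    -- `I(Ŷ;U∣Z̃) = log (n+1)` : the maximal possible value
    ∧ condMutInfo μ Yh U Zt = ENNReal.ofReal (Real.log (n + 1)) := by
  classical
  have hπ : (Measure.pi fun _ : Fin (n+1) => unifD) = piD n := rfl
  -- almost surely, the supersample is good
  have hgoodZ : ∀ᵐ z ∂(μ.map Zt), z ∈ Good n := by
    rw [hiid, hπ]; exact good_ae
  have hgoodμ : ∀ᵐ ω ∂μ, Zt ω ∈ Good n := by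
    rw [ae_iff]
    have h0 : μ (Zt ⁻¹' (Good n)ᶜ) = 0 := by
      rw [← Measure.map_apply hZt measurableSet_good.compl]
      rw [ae_iff] at hgoodZ
      exact hgoodZ
    exact h0
  -- predictions agree with the idealized predictor, losses vanish
  have hYfp : ∀ ω, Zt ω ∈ Good n → Yh ω = fpred n (Zt ω) (U ω) := by
    intro ω hg
    funext i
    rw [hYh ω i, memA_eq_fpred hg]
  have hnotlt : ∀ ω, Zt ω ∈ Good n → ∀ i, ¬ (Yh ω i * (Zt ω i).2 < 0) := by
    intro ω hg i
    rw [hYfp ω hg]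
    unfold fpred
    rw [hg.1 i]
    split
    · exact not_lt.2 (mul_hstar_nonneg _)
    · exact not_lt.2 (mul_self_nonneg _)
  have hLzero : ∀ᵐ ω ∂μ, L ω = (fun _ => (0:ℝ)) := by
    filter_upwards [hgoodμ] with ω hg
    funext i
    rw [hL ω i, if_neg (hnotlt ω hg i)]
  refine ⟨?_, ?_, ?_, ?_⟩
  -- 1. interpolation
  · filter_upwards [hLzero] with ω h i _
    rw [h]
  -- 2. zero risk
  · have : (fun ω => ∫ z : ℝ × ℝ,
        (if memA n ((U ω).removeNth (Zt ω)) z.1 * z.2 < 0 then (1:ℝ) else 0) ∂unifD)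
        = fun _ => (0:ℝ) := funext fun ω => risk_zero n _
    rw [this, integral_zero]
  -- 3. I(L;U|Z) = 0
  · have hψU : ∀ u : Fin (n+1), Measurable (fun _ : Fin (n+1) → ℝ × ℝ => u) :=
      fun u => measurable_const
    have hψJ : ∀ u : Fin (n+1), Measurable
        (fun _ : Fin (n+1) → ℝ × ℝ => (((fun _ => (0:ℝ)) : Fin (n+1) → ℝ), u)) :=
      fun u => measurable_const
    have hψ1 : ∀ u : Fin (n+1), Measurable
        (fun _ : Fin (n+1) → ℝ × ℝ => ((fun _ => (0:ℝ)) : Fin (n+1) → ℝ)) :=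
      fun u => measurable_const
    have hcd1 := condDistrib_eq_mixKernel hZt hU hUunif hUindep
      (fun u _ => (((fun _ => (0:ℝ)) : Fin (n+1) → ℝ), u)) hψJ
      (fun ω => (L ω, U ω)) (hLmeas.prodMk hU)
      (by filter_upwards [hLzero] with ω h; rw [h])
    have hcd2 := condDistrib_eq_mixKernel hZt hU hUunif hUindep
      (fun _ _ => ((fun _ => (0:ℝ)) : Fin (n+1) → ℝ)) hψ1 L hLmeas
      (by filter_upwards [hLzero] with ω h; rw [h])
    have hcd3 := condDistrib_eq_mixKernel hZt hU hUunif hUindep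
      (fun u _ => u) hψU U hU (Filter.Eventually.of_forall fun ω => rfl)
    have hae0 : ∀ᵐ z ∂(μ.map Zt), dMutInfo μ L U Zt z = 0 := by
      filter_upwards [hcd1, hcd2, hcd3] with z h1 h2 h3
      unfold dMutInfo
      rw [h1, h2, h3, mixKernel_apply, mixKernel_apply, mixKernel_apply,
        mixDirac_prod_const n ((fun _ => (0:ℝ)) : Fin (n+1) → ℝ)]
      haveI := isProbability_mixDirac
        (fun u : Fin (n+1) => (((fun _ => (0:ℝ)) : Fin (n+1) → ℝ), u))
      exact klDiv'_self _
    unfold condMutInfo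
    rw [lintegral_congr_ae hae0, lintegral_zero]
  -- 4. I(Yh;U|Z) = log (n+1)
  · have hψU : ∀ u : Fin (n+1), Measurable (fun _ : Fin (n+1) → ℝ × ℝ => u) :=
      fun u => measurable_const
    have hψJ : ∀ u : Fin (n+1),
        Measurable (fun z : Fin (n+1) → ℝ × ℝ => (fpred n z u, u)) :=
      fun u => (measurable_fpred n u).prodMk measurable_const
    have hcd1 := condDistrib_eq_mixKernel hZt hU hUunif hUindep
      (fun u z => (fpred n z u, u)) hψJ
      (fun ω => (Yh ω, U ω)) (hYhmeas.prodMk hU)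
      (by filter_upwards [hgoodμ] with ω hg; rw [hYfp ω hg])
    have hcd2 := condDistrib_eq_mixKernel hZt hU hUunif hUindep
      (fun u z => fpred n z u) (measurable_fpred n) Yh hYhmeas
      (by filter_upwards [hgoodμ] with ω hg; exact hYfp ω hg)
    have hcd3 := condDistrib_eq_mixKernel hZt hU hUunif hUindep
      (fun u _ => u) hψU U hU (Filter.Eventually.of_forall fun ω => rfl)
    have haec : ∀ᵐ z ∂(μ.map Zt),
        dMutInfo μ Yh U Zt z = ENNReal.ofReal (Real.log ((n:ℝ)+1)) := by
      filter_upwards [hcd1, hcd2, hcd3, hgoodZ] with z h1 h2 h3 hzg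
      unfold dMutInfo
      rw [h1, h2, h3, mixKernel_apply, mixKernel_apply, mixKernel_apply]
      exact klDiv_graph n (fun u => fpred n z u) (fpred_injective hzg)
    haveI : IsProbabilityMeasure (μ.map Zt) := by
      rw [hiid]; infer_instance
    unfold condMutInfo
    rw [lintegral_congr_ae haec, lintegral_const, measure_univ, mul_one]
end
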